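/- arXiv:2409.06581 — 5 statements merged into one kernel-verified Lean document; each statement's English description precedes it below -/
import Mathlib

section
/- For every uniformly elliptic nearest-neighbor environment ω on ℤ^d with ellipticity constant κ and every u > 0, the function G_{u,ω} is well defined, nonnegative and finite: 0 ≤ G_{u,ω}(t,x,y) < ∞ for all t ≥ 0 and x, y ∈ ℤ^d; moreover it is Lipschitz with constant u + log(1/κ): for all t ≥ 0, t' ∈ ℝ with t + t' ≥ 0, and all x, x', y, y' ∈ ℤ^d, |G_{u,ω}(t+t', x+x', y+y') − G_{u,ω}(t, x, y)| ≤ (u + log(1/κ)) · (|t'| + |x'|₁ + |y'|₁). -/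
/-- The set of the `2d` unit vectors of `ℤ^d`. -/
def unitVecs (d : ℕ) : Finset (Fin d → ℤ) :=
  (Finset.univ.image fun i : Fin d => fun j => if j = i then (1 : ℤ) else 0) ∪
  (Finset.univ.image fun i : Fin d => fun j => if j = i then (-1 : ℤ) else 0)

/-- Quenched `n`-step transition probabilities of the random walk in environment `ω`. -/
noncomputable def qtp (d : ℕ) (ω : (Fin d → ℤ) → (Fin d → ℤ) → ℝ) :
    ℕ → (Fin d → ℤ) → (Fin d → ℤ) → ℝ
  | 0, x, y => if x = y then 1 else 0
  | n + 1, x, y => ∑ e ∈ unitVecs d, ω x e * qtp d ω n (x + e) y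

/-- The ℓ¹-norm of a point of `ℤ^d`, as a natural number. -/
def l1 {d : ℕ} (x : Fin d → ℤ) : ℕ := ∑ i, (x i).natAbs

/-- `G_{u,ω}(t,x,y) := - log sup_n { e^{-u |n - t|} p_n(x,y) }`. -/
noncomputable def Gfun (d : ℕ) (ω : (Fin d → ℤ) → (Fin d → ℤ) → ℝ)
    (u t : ℝ) (x y : Fin d → ℤ) : ℝ :=
  - Real.log (⨆ n : ℕ, Real.exp (-u * |(n : ℝ) - t|) * qtp d ω n x y)

/-!
Write `S(t,x,y)` for the supremum inside `G`. Moving the start point `x` or the end point `y` by a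
unit vector changes `S` by a factor of at most `e^u / κ`: the first (resp. last) step of a walk
has probability at least `κ`, and trading `n` for `n + 1` changes the weight `e^{-u|n-t|}` by at
most `e^u`. Moving the time by `t'` changes the weight, hence `S`, by at most `e^{u|t'|}`. Taking
logarithms and following a geodesic of `ℤ^d` from `x` to `x + x'` gives the one-sided Lipschitz
bound, and exchanging the two points gives the other side. Positivity of `S` comes from
`p_n(x, x + z) ≥ κ^n` with `n = |z|₁`, and `G ≥ 0` from `p_n ≤ 1`.
-/

section Lattice

variable {d : ℕ}

@[simp]
lemma l1_zero : l1 (0 : Fin d → ℤ) = 0 := by simp [l1]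

@[simp]
lemma l1_neg (z : Fin d → ℤ) : l1 (-z) = l1 z := by simp [l1]

lemma eq_zero_of_l1_eq_zero {z : Fin d → ℤ} (h : l1 z = 0) : z = 0 := by
  funext i
  simpa using Finset.sum_eq_zero_iff.mp h i (Finset.mem_univ i)

lemma l1_sub_single_add (z : Fin d → ℤ) (i : Fin d) (s : ℤ) :
    l1 (z - Pi.single i s) + (z i).natAbs = l1 z + (z i - s).natAbs := by
  have hoff : ∀ j ∈ Finset.univ.erase i,
      ((z - Pi.single i s : Fin d → ℤ) j).natAbs = (z j).natAbs :=
    fun j hj => by rw [Pi.sub_apply, Pi.single_eq_of_ne (Finset.ne_of_mem_erase hj), sub_zero]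
  unfold l1
  rw [← Finset.add_sum_erase _ _ (Finset.mem_univ i),
    ← Finset.add_sum_erase _ _ (Finset.mem_univ i), Finset.sum_congr rfl hoff, Pi.sub_apply,
    Pi.single_eq_same]
  ring

lemma mem_unitVecs {e : Fin d → ℤ} :
    e ∈ unitVecs d ↔ ∃ i, e = Pi.single i 1 ∨ e = Pi.single i (-1) := by
  simp only [unitVecs, ← Pi.single_apply, Finset.mem_union, Finset.mem_image, Finset.mem_univ,
    true_and]
  constructor
  · rintro (⟨i, rfl⟩ | ⟨i, rfl⟩)
    exacts [⟨i, .inl rfl⟩, ⟨i, .inr rfl⟩]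
  · rintro ⟨i, rfl | rfl⟩
    exacts [.inl ⟨i, rfl⟩, .inr ⟨i, rfl⟩]

lemma neg_mem_unitVecs {e : Fin d → ℤ} (he : e ∈ unitVecs d) : -e ∈ unitVecs d := by
  obtain ⟨i, rfl | rfl⟩ := mem_unitVecs.mp he
  exacts [mem_unitVecs.mpr ⟨i, .inr (Pi.single_neg i 1).symm⟩,
    mem_unitVecs.mpr ⟨i, .inl (by rw [← Pi.single_neg, neg_neg])⟩]

lemma exists_unitVecs_l1_sub_add_one {z : Fin d → ℤ} (hz : z ≠ 0) :
    ∃ e ∈ unitVecs d, l1 (z - e) + 1 = l1 z := by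
  obtain ⟨i, hi⟩ : ∃ i, z i ≠ 0 := Function.ne_iff.mp hz
  rcases hi.lt_or_gt with hneg | hpos
  · refine ⟨Pi.single i (-1), mem_unitVecs.mpr ⟨i, .inr rfl⟩, ?_⟩
    have := l1_sub_single_add z i (-1)
    omega
  · refine ⟨Pi.single i 1, mem_unitVecs.mpr ⟨i, .inl rfl⟩, ?_⟩
    have := l1_sub_single_add z i 1
    omega

@[elab_as_elim]
lemma l1_induction {P : (Fin d → ℤ) → Prop} (zero : P 0)
    (step : ∀ z, ∀ e ∈ unitVecs d, l1 (z + e) = l1 z + 1 → P z → P (z + e))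
    (z : Fin d → ℤ) : P z := by
  induction hm : l1 z generalizing z with
  | zero => rwa [eq_zero_of_l1_eq_zero hm]
  | succ m ih =>
    obtain ⟨e, he, hl⟩ := exists_unitVecs_l1_sub_add_one (z := z) (by rintro rfl; simp at hm)
    simpa using step (z - e) e he (by simpa using hl.symm) (ih (z - e) (by omega))

lemma le_add_mul_l1_of_le_add_of_mem_unitVecs {F : (Fin d → ℤ) → ℝ} {C : ℝ}
    (hF : ∀ z, ∀ e ∈ unitVecs d, F (z + e) ≤ F z + C) (w z : Fin d → ℤ) :
    F (w + z) ≤ F w + C * l1 z := by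
  induction z using l1_induction with
  | zero => simp
  | step z e he hl ih =>
    rw [← add_assoc, hl]
    push_cast
    linarith [hF (w + z) e he]

end Lattice

section TransitionProbabilities

variable {d : ℕ} {ω : (Fin d → ℤ) → (Fin d → ℤ) → ℝ} {κ : ℝ}

lemma qtp_nonneg (hω : ∀ x, ∀ e ∈ unitVecs d, 0 ≤ ω x e) (n : ℕ) (x y : Fin d → ℤ) :
    0 ≤ qtp d ω n x y := by
  induction n generalizing x with
  | zero => unfold qtp; positivity
  | succ n ih => exact Finset.sum_nonneg fun e he => mul_nonneg (hω x e he) (ih _)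

lemma qtp_le_one (hω : ∀ x, ∀ e ∈ unitVecs d, 0 ≤ ω x e)
    (hsum : ∀ x, ∑ e ∈ unitVecs d, ω x e = 1) (n : ℕ) (x y : Fin d → ℤ) :
    qtp d ω n x y ≤ 1 := by
  induction n generalizing x with
  | zero => unfold qtp; split_ifs <;> norm_num
  | succ n ih =>
    calc qtp d ω (n + 1) x y ≤ ∑ e ∈ unitVecs d, ω x e * 1 :=
          Finset.sum_le_sum fun e he => mul_le_mul_of_nonneg_left (ih _) (hω x e he)
      _ = 1 := by simpa using hsum x

lemma mul_qtp_le_qtp_succ_left (hω : ∀ x, ∀ e ∈ unitVecs d, 0 ≤ ω x e)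
    (hell : ∀ x, ∀ e ∈ unitVecs d, κ ≤ ω x e) (n : ℕ) (x y : Fin d → ℤ) {e : Fin d → ℤ}
    (he : e ∈ unitVecs d) : κ * qtp d ω n (x + e) y ≤ qtp d ω (n + 1) x y :=
  calc κ * qtp d ω n (x + e) y ≤ ω x e * qtp d ω n (x + e) y :=
        mul_le_mul_of_nonneg_right (hell x e he) (qtp_nonneg hω n _ y)
    _ ≤ ∑ e' ∈ unitVecs d, ω x e' * qtp d ω n (x + e') y :=
        Finset.single_le_sum (fun e' he' => mul_nonneg (hω x e' he') (qtp_nonneg hω n _ y)) he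

lemma mul_qtp_le_qtp_succ_right (hω : ∀ x, ∀ e ∈ unitVecs d, 0 ≤ ω x e)
    (hell : ∀ x, ∀ e ∈ unitVecs d, κ ≤ ω x e) (n : ℕ) (x y : Fin d → ℤ) {e : Fin d → ℤ}
    (he : e ∈ unitVecs d) : κ * qtp d ω n x y ≤ qtp d ω (n + 1) x (y + e) := by
  induction n generalizing x with
  | zero =>
    have : qtp d ω 0 x y = qtp d ω 0 (x + e) (y + e) := by simp [qtp]
    exact this ▸ mul_qtp_le_qtp_succ_left hω hell 0 x (y + e) he
  | succ n ih =>
    rw [qtp, qtp, Finset.mul_sum]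
    refine Finset.sum_le_sum fun e' he' => ?_
    rw [mul_left_comm]
    exact mul_le_mul_of_nonneg_left (ih _) (hω x e' he')

lemma pow_l1_le_qtp (hκ : 0 ≤ κ) (hω : ∀ x, ∀ e ∈ unitVecs d, 0 ≤ ω x e)
    (hell : ∀ x, ∀ e ∈ unitVecs d, κ ≤ ω x e) (x z : Fin d → ℤ) :
    κ ^ l1 z ≤ qtp d ω (l1 z) x (x + z) := by
  induction z using l1_induction with
  | zero => simp [qtp]
  | step z e he hl ih =>
    rw [hl, pow_succ', ← add_assoc]
    exact (mul_le_mul_of_nonneg_left ih hκ).trans (mul_qtp_le_qtp_succ_right hω hell _ x _ he)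

end TransitionProbabilities

section WeightedSupremum

lemma ciSup_le_mul_ciSup_of_le {ι ι' : Type*} [Nonempty ι] {f : ι → ℝ} {g : ι' → ℝ} {c : ℝ}
    (hc : 0 ≤ c) (hg : BddAbove (Set.range g)) (σ : ι → ι') (h : ∀ i, f i ≤ c * g (σ i)) :
    ⨆ i, f i ≤ c * ⨆ i, g i :=
  ciSup_le fun i => (h i).trans (mul_le_mul_of_nonneg_left (le_ciSup hg (σ i)) hc)

lemma exp_neg_mul_le_exp_mul_mul {u a b δ : ℝ} (hu : 0 ≤ u) (h : b ≤ a + δ) :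
    Real.exp (-u * a) ≤ Real.exp (u * δ) * Real.exp (-u * b) := by
  rw [← Real.exp_add]
  exact Real.exp_le_exp.mpr (by nlinarith)

noncomputable def expWeightedSup (u t : ℝ) (q : ℕ → ℝ) : ℝ :=
  ⨆ n : ℕ, Real.exp (-u * |(n : ℝ) - t|) * q n

lemma Gfun_eq_neg_log_expWeightedSup (d : ℕ) (ω : (Fin d → ℤ) → (Fin d → ℤ) → ℝ) (u t : ℝ)
    (x y : Fin d → ℤ) : Gfun d ω u t x y = -Real.log (expWeightedSup u t fun n => qtp d ω n x y) :=
  rfl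

variable {u t : ℝ} {q : ℕ → ℝ}

lemma exp_weight_mul_le_one (hu : 0 ≤ u) {n : ℕ} (hq0 : 0 ≤ q n) (hq1 : q n ≤ 1) :
    Real.exp (-u * |(n : ℝ) - t|) * q n ≤ 1 :=
  mul_le_one₀ (Real.exp_le_one_iff.mpr (by nlinarith [abs_nonneg ((n : ℝ) - t)])) hq0 hq1

lemma bddAbove_range_exp_weight_mul (hu : 0 ≤ u) (hq0 : ∀ n, 0 ≤ q n) (hq1 : ∀ n, q n ≤ 1) :
    BddAbove (Set.range fun n : ℕ => Real.exp (-u * |(n : ℝ) - t|) * q n) :=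
  ⟨1, by rintro _ ⟨n, rfl⟩; exact exp_weight_mul_le_one hu (hq0 n) (hq1 n)⟩

lemma expWeightedSup_le_one (hu : 0 ≤ u) (hq0 : ∀ n, 0 ≤ q n) (hq1 : ∀ n, q n ≤ 1) :
    expWeightedSup u t q ≤ 1 :=
  ciSup_le fun n => exp_weight_mul_le_one hu (hq0 n) (hq1 n)

lemma expWeightedSup_pos (hu : 0 ≤ u) (hq0 : ∀ n, 0 ≤ q n) (hq1 : ∀ n, q n ≤ 1) {n : ℕ}
    (hn : 0 < q n) : 0 < expWeightedSup u t q :=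
  (mul_pos (Real.exp_pos _) hn).trans_le (le_ciSup (bddAbove_range_exp_weight_mul hu hq0 hq1) n)

lemma expWeightedSup_le_exp_mul (hu : 0 ≤ u) (hq0 : ∀ n, 0 ≤ q n) (hq1 : ∀ n, q n ≤ 1)
    (t' : ℝ) : expWeightedSup u t' q ≤ Real.exp (u * |t' - t|) * expWeightedSup u t q := by
  refine ciSup_le_mul_ciSup_of_le (Real.exp_pos _).le
    (bddAbove_range_exp_weight_mul hu hq0 hq1) id fun n => ?_
  rw [← mul_assoc]
  exact mul_le_mul_of_nonneg_right
    (exp_neg_mul_le_exp_mul_mul hu (abs_sub_le (n : ℝ) t' t)) (hq0 n)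

lemma expWeightedSup_le_exp_mul_of_le_succ {q' : ℕ → ℝ} {κ : ℝ} (hu : 0 ≤ u) (hκ : 0 < κ)
    (hq0 : ∀ n, 0 ≤ q n) (hq1 : ∀ n, q n ≤ 1) (hq'0 : ∀ n, 0 ≤ q' n)
    (hq' : ∀ n, κ * q' n ≤ q (n + 1)) :
    expWeightedSup u t q' ≤ Real.exp (u + Real.log (1 / κ)) * expWeightedSup u t q := by
  refine ciSup_le_mul_ciSup_of_le (Real.exp_pos _).le
    (bddAbove_range_exp_weight_mul hu hq0 hq1) Nat.succ fun n => ?_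
  have hshift : |((n + 1 : ℕ) : ℝ) - t| ≤ |(n : ℝ) - t| + 1 := by
    push_cast
    linarith [abs_sub_le ((n : ℝ) + 1) n t, show |(n : ℝ) + 1 - n| = 1 by simp]
  calc Real.exp (-u * |(n : ℝ) - t|) * q' n
      ≤ Real.exp u * Real.exp (-u * |((n + 1 : ℕ) : ℝ) - t|) * q' n :=
        mul_le_mul_of_nonneg_right (by simpa using exp_neg_mul_le_exp_mul_mul hu hshift) (hq'0 n)
    _ ≤ Real.exp u * Real.exp (-u * |((n + 1 : ℕ) : ℝ) - t|) * (q (n + 1) / κ) :=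
        mul_le_mul_of_nonneg_left ((le_div_iff₀ hκ).mpr (by linarith [hq' n])) (by positivity)
    _ = Real.exp (u + Real.log (1 / κ)) *
          (Real.exp (-u * |((n + 1 : ℕ) : ℝ) - t|) * q (n + 1)) := by
        rw [Real.exp_add, Real.exp_log (by positivity)]
        ring

end WeightedSupremum

lemma Real.log_le_add_log_of_le_exp_mul {a b c : ℝ} (hb : 0 < b) (h : b ≤ Real.exp c * a) :
    Real.log b ≤ c + Real.log a := by
  have ha : 0 < a := pos_of_mul_pos_right (hb.trans_le h) (Real.exp_pos c).le
  calc Real.log b ≤ Real.log (Real.exp c * a) := Real.log_le_log hb h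
    _ = c + Real.log a := by rw [Real.log_mul (Real.exp_ne_zero c) ha.ne', Real.log_exp]

structure IsEllipticEnv (d : ℕ) (κ : ℝ) (ω : (Fin d → ℤ) → (Fin d → ℤ) → ℝ) : Prop where
  pos : 0 < κ
  le_apply : ∀ x, ∀ e ∈ unitVecs d, κ ≤ ω x e
  sum_eq_one : ∀ x, ∑ e ∈ unitVecs d, ω x e = 1

namespace IsEllipticEnv

variable {d : ℕ} {ω : (Fin d → ℤ) → (Fin d → ℤ) → ℝ} {κ u : ℝ}

lemma nonneg (hE : IsEllipticEnv d κ ω) : ∀ x, ∀ e ∈ unitVecs d, 0 ≤ ω x e :=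
  fun x e he => hE.pos.le.trans (hE.le_apply x e he)

lemma le_one (hE : IsEllipticEnv d κ ω) : κ ≤ 1 := by
  obtain ⟨e, he⟩ := Finset.nonempty_of_sum_ne_zero ((hE.sum_eq_one 0).trans_ne one_ne_zero)
  calc κ ≤ ω 0 e := hE.le_apply 0 e he
    _ ≤ ∑ e' ∈ unitVecs d, ω 0 e' := Finset.single_le_sum (hE.nonneg 0) he
    _ = 1 := hE.sum_eq_one 0

lemma qtp_nonneg (hE : IsEllipticEnv d κ ω) (n : ℕ) (x y : Fin d → ℤ) : 0 ≤ qtp d ω n x y :=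
  _root_.qtp_nonneg hE.nonneg n x y

lemma qtp_le_one (hE : IsEllipticEnv d κ ω) (n : ℕ) (x y : Fin d → ℤ) : qtp d ω n x y ≤ 1 :=
  _root_.qtp_le_one hE.nonneg hE.sum_eq_one n x y

lemma expWeightedSup_qtp_pos (hE : IsEllipticEnv d κ ω) (hu : 0 ≤ u) (t : ℝ) (x y : Fin d → ℤ) :
    0 < expWeightedSup u t fun n => qtp d ω n x y := by
  have hreach := pow_l1_le_qtp hE.pos.le hE.nonneg hE.le_apply x (y - x)
  rw [add_sub_cancel] at hreach
  exact expWeightedSup_pos hu (hE.qtp_nonneg · x y) (hE.qtp_le_one · x y)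
    ((pow_pos hE.pos _).trans_le hreach)

lemma Gfun_nonneg (hE : IsEllipticEnv d κ ω) (hu : 0 ≤ u) (t : ℝ) (x y : Fin d → ℤ) :
    0 ≤ Gfun d ω u t x y :=
  neg_nonneg.mpr (Real.log_nonpos (hE.expWeightedSup_qtp_pos hu t x y).le
    (expWeightedSup_le_one hu (hE.qtp_nonneg · x y) (hE.qtp_le_one · x y)))

lemma Gfun_add_le_time (hE : IsEllipticEnv d κ ω) (hu : 0 ≤ u) (t t' : ℝ) (x y : Fin d → ℤ) :
    Gfun d ω u (t + t') x y ≤ Gfun d ω u t x y + u * |t'| := by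
  have h := expWeightedSup_le_exp_mul hu (hE.qtp_nonneg · x y) (hE.qtp_le_one · x y)
    (t := t + t') t
  rw [sub_add_cancel_left, abs_neg] at h
  have := Real.log_le_add_log_of_le_exp_mul (hE.expWeightedSup_qtp_pos hu t x y) h
  rw [Gfun_eq_neg_log_expWeightedSup, Gfun_eq_neg_log_expWeightedSup]
  linarith

lemma Gfun_le_of_qtp_succ (hE : IsEllipticEnv d κ ω) (hu : 0 ≤ u) (t : ℝ) {x y x' y' : Fin d → ℤ}
    (hstep : ∀ n, κ * qtp d ω n x' y' ≤ qtp d ω (n + 1) x y) :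
    Gfun d ω u t x y ≤ Gfun d ω u t x' y' + (u + Real.log (1 / κ)) := by
  have h := expWeightedSup_le_exp_mul_of_le_succ hu hE.pos (t := t) (hE.qtp_nonneg · x y)
    (hE.qtp_le_one · x y) (hE.qtp_nonneg · x' y') hstep
  have := Real.log_le_add_log_of_le_exp_mul (hE.expWeightedSup_qtp_pos hu t x' y') h
  rw [Gfun_eq_neg_log_expWeightedSup, Gfun_eq_neg_log_expWeightedSup]
  linarith

lemma Gfun_add_left_le (hE : IsEllipticEnv d κ ω) (hu : 0 ≤ u) (t : ℝ) {x e : Fin d → ℤ}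
    (y : Fin d → ℤ) (he : e ∈ unitVecs d) :
    Gfun d ω u t (x + e) y ≤ Gfun d ω u t x y + (u + Real.log (1 / κ)) :=
  hE.Gfun_le_of_qtp_succ hu t fun n => by
    simpa using mul_qtp_le_qtp_succ_left hE.nonneg hE.le_apply n (x + e) y (neg_mem_unitVecs he)

lemma Gfun_add_right_le (hE : IsEllipticEnv d κ ω) (hu : 0 ≤ u) (t : ℝ) (x : Fin d → ℤ)
    {y e : Fin d → ℤ} (he : e ∈ unitVecs d) :
    Gfun d ω u t x (y + e) ≤ Gfun d ω u t x y + (u + Real.log (1 / κ)) :=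
  hE.Gfun_le_of_qtp_succ hu t (mul_qtp_le_qtp_succ_right hE.nonneg hE.le_apply · x y he)

lemma Gfun_add_le (hE : IsEllipticEnv d κ ω) (hu : 0 ≤ u) (t t' : ℝ) (x x' y y' : Fin d → ℤ) :
    Gfun d ω u (t + t') (x + x') (y + y') ≤
      Gfun d ω u t x y + (u + Real.log (1 / κ)) * (|t'| + (l1 x' : ℝ) + (l1 y' : ℝ)) := by
  have htime := hE.Gfun_add_le_time hu t t' (x + x') (y + y')
  have hleft := le_add_mul_l1_of_le_add_of_mem_unitVecs (F := fun z => Gfun d ω u t z (y + y'))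
    (fun _ _ he => hE.Gfun_add_left_le hu t _ he) x x'
  have hright := le_add_mul_l1_of_le_add_of_mem_unitVecs (F := fun z => Gfun d ω u t x z)
    (fun _ _ he => hE.Gfun_add_right_le hu t x he) y y'
  have hu_le : u * |t'| ≤ (u + Real.log (1 / κ)) * |t'| :=
    mul_le_mul_of_nonneg_right
      (le_add_of_nonneg_right (Real.log_nonneg (one_le_one_div hE.pos hE.le_one))) (abs_nonneg t')
  linarith

end IsEllipticEnv

theorem stmt2_general (d : ℕ) (κ : ℝ) (hκ0 : 0 < κ)
    (ω : (Fin d → ℤ) → (Fin d → ℤ) → ℝ)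
    (hell : ∀ x, ∀ e ∈ unitVecs d, κ ≤ ω x e)
    (hsum : ∀ x, ∑ e ∈ unitVecs d, ω x e = 1)
    (u : ℝ) (hu : 0 < u) :
    -- well-definedness: the supremum is strictly positive (and the `ℝ`-valued
    -- supremum is automatically finite), so `G_{u,ω}` is well defined ...
    (∀ t : ℝ, 0 ≤ t → ∀ x y : Fin d → ℤ,
      0 < ⨆ n : ℕ, Real.exp (-u * |(n : ℝ) - t|) * qtp d ω n x y) ∧
    -- ... nonnegative and finite,
    (∀ t : ℝ, 0 ≤ t → ∀ x y : Fin d → ℤ, 0 ≤ Gfun d ω u t x y) ∧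
    -- and Lipschitz with constant `u + log (1/κ)`.
    (∀ t t' : ℝ, 0 ≤ t → 0 ≤ t + t' → ∀ x x' y y' : Fin d → ℤ,
      |Gfun d ω u (t + t') (x + x') (y + y') - Gfun d ω u t x y|
        ≤ (u + Real.log (1 / κ)) * (|t'| + (l1 x' : ℝ) + (l1 y' : ℝ))) := by
  have hE : IsEllipticEnv d κ ω := ⟨hκ0, hell, hsum⟩
  refine ⟨fun t _ x y => hE.expWeightedSup_qtp_pos hu.le t x y,
    fun t _ x y => hE.Gfun_nonneg hu.le t x y, fun t t' _ _ x x' y y' => ?_⟩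
  have hback := hE.Gfun_add_le hu.le (t + t') (-t') (x + x') (-x') (y + y') (-y')
  simp only [add_neg_cancel_right, abs_neg, l1_neg] at hback
  exact abs_sub_le_iff.mpr ⟨sub_le_iff_le_add'.mpr (hE.Gfun_add_le hu.le t t' x x' y y'),
    sub_le_iff_le_add'.mpr hback⟩

theorem stmt2 (d : ℕ) (hd : 1 ≤ d) (κ : ℝ) (hκ0 : 0 < κ) (hκ1 : κ ≤ 1 / (2 * d))
    (ω : (Fin d → ℤ) → (Fin d → ℤ) → ℝ)
    (hell : ∀ x, ∀ e ∈ unitVecs d, κ ≤ ω x e)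
    (hsum : ∀ x, ∑ e ∈ unitVecs d, ω x e = 1)
    (u : ℝ) (hu : 0 < u) :
    -- well-definedness: the supremum is strictly positive (and the `ℝ`-valued
    -- supremum is automatically finite), so `G_{u,ω}` is well defined ...
    (∀ t : ℝ, 0 ≤ t → ∀ x y : Fin d → ℤ,
      0 < ⨆ n : ℕ, Real.exp (-u * |(n : ℝ) - t|) * qtp d ω n x y) ∧
    -- ... nonnegative and finite,
    (∀ t : ℝ, 0 ≤ t → ∀ x y : Fin d → ℤ, 0 ≤ Gfun d ω u t x y) ∧
    -- and Lipschitz with constant `u + log (1/κ)`.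
    (∀ t t' : ℝ, 0 ≤ t → 0 ≤ t + t' → ∀ x x' y y' : Fin d → ℤ,
      |Gfun d ω u (t + t') (x + x') (y + y') - Gfun d ω u t x y|
        ≤ (u + Real.log (1 / κ)) * (|t'| + (l1 x' : ℝ) + (l1 y' : ℝ))) :=
  stmt2_general d κ hκ0 ω hell hsum u hu
end

section
/- Let d ≥ 1, L > 0, and let g₀ : ℕ₊ × ℤ^d → ℝ satisfy: (a) integer homogeneity, g₀(k·m, k·z) = k · g₀(m, z) for all k, m ∈ ℕ₊ and z ∈ ℤ^d; and (b) the Lipschitz bound |g₀(m, z) − g₀(m', z')| ≤ L·(|m − m'| + |z − z'|₁) for all m, m' ∈ ℕ₊ and z, z' ∈ ℤ^d. Then there exists a unique continuous function g : (0,∞) × ℝ^d → ℝ such that g(m, z) = g₀(m, z) for all m ∈ ℕ₊, z ∈ ℤ^d, and g(c·t, c·η) = c · g(t, η) for all c > 0, t > 0, η ∈ ℝ^d. This g satisfies |g(t, η) − g(t', η')| ≤ L·(|t − t'| + |η − η'|₁) and g(t, η) = t · g(1, η/t) for all t > 0. If in addition g₀ is subadditive, i.e. g₀(m + m', z + z')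 ≤ g₀(m, z) + g₀(m', z') for all m, m' ∈ ℕ₊ and z, z' ∈ ℤ^d, then the function η ↦ g(1, η) is convex on ℝ^d. -/
/-!
At a rational point `(n/m, z/m)` the only possible value is `g₀ n z / m`; homogeneity makes this
well defined and, after clearing denominators, turns the Lipschitz bound on `g₀` into the same
bound for the `ℓ¹` distance between rational points. The McShane extension of these values is an
`L`-Lipschitz function on all of `ℝ × ℝ^d`. Since the rational points are dense in
`(0,∞) × ℝ^d`, every identity or inequality between continuous expressions that holds at rational
points holds on `(0,∞) × ℝ^d`: this gives uniqueness, homogeneity under real dilations and, when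
`g₀` is subadditive, subadditivity, which together with homogeneity is convexity of `g(1, ·)`.
-/

open Set

theorem exists_lipschitzWith_extend_real_of_family {α ι : Type*} [PseudoMetricSpace α]
    {K : NNReal} (x : ι → α) (v : ι → ℝ) (h : ∀ i j, v i - v j ≤ K * dist (x i) (x j)) :
    ∃ g : α → ℝ, LipschitzWith K g ∧ ∀ i, g (x i) = v i := by
  classical
  have hv : ∀ i j, x i = x j → v i = v j := fun i j hij => by
    have h₁ := h i j
    have h₂ := h j i
    rw [hij, dist_self, mul_zero] at h₁ h₂
    linarith
  let f := Function.extend x v 0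
  have hf : ∀ i, f (x i) = v i := fun i => by
    show Function.extend x v 0 (x i) = v i
    have hex : ∃ j, x j = x i := ⟨i, rfl⟩
    rw [Function.extend_def, dif_pos hex]
    exact hv _ _ hex.choose_spec
  have hlip : LipschitzOnWith K f (range x) := by
    refine LipschitzOnWith.of_dist_le_mul ?_
    rintro _ ⟨i, rfl⟩ _ ⟨j, rfl⟩
    rw [hf, hf, Real.dist_eq, abs_sub_le_iff]
    exact ⟨h i j, dist_comm (x i) (x j) ▸ h j i⟩
  obtain ⟨g, hg, hfg⟩ := hlip.extend_real
  exact ⟨g, hg, fun i => (hfg ⟨i, rfl⟩).symm.trans (hf i)⟩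

theorem convexOn_slice_of_subadditive_of_homogeneous {E : Type*} [AddCommGroup E] [Module ℝ E]
    {F : ℝ × E → ℝ} (hsmul : ∀ c : ℝ, 0 < c → ∀ p : ℝ × E, 0 < p.1 → F (c • p) = c * F p)
    (hadd : ∀ p q : ℝ × E, 0 < p.1 → 0 < q.1 → F (p + q) ≤ F p + F q) :
    ConvexOn ℝ univ (fun η => F (1, η)) := by
  refine convexOn_iff_forall_pos.mpr ⟨convex_univ, fun x _ y _ a b ha hb hab => ?_⟩
  have hsplit : ((1 : ℝ), a • x + b • y) = a • ((1 : ℝ), x) + b • ((1 : ℝ), y) := by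
    simp [hab]
  rw [hsplit, smul_eq_mul, smul_eq_mul, ← hsmul a ha _ one_pos, ← hsmul b hb _ one_pos]
  exact hadd _ _ (by simpa using ha) (by simpa using hb)

noncomputable section

variable {d : ℕ}

abbrev L1Space (d : ℕ) := WithLp 1 (ℝ × WithLp 1 (Fin d → ℝ))

def toL1 (p : ℝ × (Fin d → ℝ)) : L1Space d := WithLp.toLp 1 (p.1, WithLp.toLp 1 p.2)

theorem dist_toL1 (p q : ℝ × (Fin d → ℝ)) :
    dist (toL1 p) (toL1 q) = |p.1 - q.1| + ∑ i, |p.2 i - q.2 i| := by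
  simp [toL1, WithLp.prod_dist_eq_of_L1, PiLp.dist_eq_of_L1, Real.dist_eq]

theorem continuous_toL1 : Continuous (toL1 : ℝ × (Fin d → ℝ) → L1Space d) := by
  unfold toL1
  fun_prop

def ratPoint (n m : ℕ+) (z : Fin d → ℤ) : ℝ × (Fin d → ℝ) := ((n : ℝ) / m, fun i => (z i : ℝ) / m)

def ratPoints (d : ℕ) : Set (ℝ × (Fin d → ℝ)) := {p | ∃ n m z, ratPoint n m z = p}

def posRats : Set ℝ := {c | ∃ k l : ℕ+, (k : ℝ) / l = c}

theorem ratPoint_mul (k n m : ℕ+) (z : Fin d → ℤ) :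
    ratPoint (k * n) (k * m) ((k : ℤ) • z) = ratPoint n m z := by
  have : (k : ℝ) ≠ 0 := by positivity
  ext <;> simp [ratPoint] <;> field_simp

theorem div_smul_ratPoint (k l n m : ℕ+) (z : Fin d → ℤ) :
    ((k : ℝ) / l) • ratPoint n m z = ratPoint (k * n) (l * m) ((k : ℤ) • z) := by
  ext <;> simp [ratPoint] <;> field_simp

theorem ratPoint_add (n n' m : ℕ+) (z z' : Fin d → ℤ) :
    ratPoint n m z + ratPoint n' m z' = ratPoint (n + n') m (z + z') := by
  ext <;> simp [ratPoint] <;> ring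

theorem ratPoint_eq_inv_smul (n m : ℕ+) (z : Fin d → ℤ) :
    ratPoint n m z = (m : ℝ)⁻¹ • ((n : ℝ), fun i => (z i : ℝ)) := by
  ext <;> simp [ratPoint, div_eq_inv_mul]

theorem ratPoint_one (n : ℕ+) (z : Fin d → ℤ) : ratPoint n 1 z = ((n : ℝ), fun i => (z i : ℝ)) := by
  simp [ratPoint]

theorem dist_toL1_ratPoint (a b k : ℕ+) (w w' : Fin d → ℤ) :
    dist (toL1 (ratPoint a k w)) (toL1 (ratPoint b k w')) =
      (|(a : ℝ) - b| + ∑ i, |(w i : ℝ) - w' i|) / k := by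
  simp [dist_toL1, ratPoint, ← sub_div, abs_div, ← Finset.sum_div, add_div]

theorem ratPoints_subset_fst_pos : ratPoints d ⊆ {p | 0 < p.1} := by
  rintro _ ⟨n, m, z, rfl⟩
  show 0 < (n : ℝ) / m
  positivity

theorem abs_sub_floor_div_lt (x : ℝ) {m : ℝ} (hm : 0 < m) : |x - ⌊x * m⌋ / m| < 1 / m := by
  rw [show x - (⌊x * m⌋ : ℝ) / m = (x * m - ⌊x * m⌋) / m by field_simp, abs_div, abs_of_pos hm,
    div_lt_div_iff_of_pos_right hm, abs_sub_lt_iff]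
  constructor <;> linarith [Int.floor_le (x * m), Int.lt_floor_add_one (x * m)]

theorem abs_sub_ceil_div_lt {x : ℝ} (hx : 0 ≤ x) {m : ℝ} (hm : 0 < m) :
    |x - ⌈x * m⌉₊ / m| < 1 / m := by
  rw [show x - (⌈x * m⌉₊ : ℝ) / m = (x * m - ⌈x * m⌉₊) / m by field_simp, abs_div, abs_of_pos hm,
    div_lt_div_iff_of_pos_right hm, abs_sub_lt_iff]
  constructor <;> linarith [Nat.le_ceil (x * m), Nat.ceil_lt_add_one (by positivity : 0 ≤ x * m)]

theorem subset_closure_ratPoints : {p : ℝ × (Fin d → ℝ) | 0 < p.1} ⊆ closure (ratPoints d) := by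
  intro p (hp : 0 < p.1)
  rw [Metric.mem_closure_iff]
  intro ε hε
  obtain ⟨k, hk⟩ := exists_nat_one_div_lt hε
  set m := k.succPNat
  have hm : (0 : ℝ) < m := by positivity
  have hmε : 1 / (m : ℝ) < ε := by simpa [m] using hk
  have hn : 0 < ⌈p.1 * m⌉₊ := Nat.ceil_pos.mpr (by positivity)
  refine ⟨_, ⟨⟨_, hn⟩, m, fun i => ⌊p.2 i * m⌋, rfl⟩, ?_⟩
  rw [Prod.dist_eq, max_lt_iff, dist_pi_lt_iff hε]
  refine ⟨(abs_sub_ceil_div_lt (le_of_lt hp) hm).trans hmε, fun i => ?_⟩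
  exact (abs_sub_floor_div_lt (p.2 i) hm).trans hmε

theorem Ioi_subset_closure_posRats : Ioi (0 : ℝ) ⊆ closure posRats := by
  intro c hc
  -- `posRats` is the image of the rational points of `ℝ × ℝ⁰` under `Prod.fst`.
  refine map_mem_closure continuous_fst (subset_closure_ratPoints (d := 0)
    (show (c, (0 : Fin 0 → ℝ)) ∈ {p : ℝ × (Fin 0 → ℝ) | 0 < p.1} from hc)) ?_
  rintro _ ⟨n, m, z, rfl⟩
  exact ⟨n, m, rfl⟩

section

variable {L : ℝ} {g₀ : ℕ+ → (Fin d → ℤ) → ℝ}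

theorem div_eq_of_homogeneous
    (hhom : ∀ (k m : ℕ+) (z : Fin d → ℤ), g₀ (k * m) ((k : ℤ) • z) = (k : ℝ) * g₀ m z)
    (k n m : ℕ+) (z : Fin d → ℤ) : g₀ (k * n) ((k : ℤ) • z) / (k * m : ℕ+) = g₀ n z / m := by
  have : (k : ℝ) ≠ 0 := by positivity
  rw [hhom, PNat.mul_coe, Nat.cast_mul, mul_div_mul_left _ _ this]

-- Over the common denominator `m * m'` this is `hlip` divided by `m * m'`.
theorem div_sub_div_le_dist_ratPoint
    (hhom : ∀ (k m : ℕ+) (z : Fin d → ℤ), g₀ (k * m) ((k : ℤ) • z) = (k : ℝ) * g₀ m z)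
    (hlip : ∀ (m m' : ℕ+) (z z' : Fin d → ℤ),
      |g₀ m z - g₀ m' z'| ≤ L * (|(m : ℝ) - (m' : ℝ)| + ∑ i, |(z i : ℝ) - (z' i : ℝ)|))
    (n m n' m' : ℕ+) (z z' : Fin d → ℤ) :
    g₀ n z / m - g₀ n' z' / m' ≤ L * dist (toL1 (ratPoint n m z)) (toL1 (ratPoint n' m' z')) := by
  rw [← div_eq_of_homogeneous hhom m' n m z, ← div_eq_of_homogeneous hhom m n' m' z',
    ← ratPoint_mul m' n m z, ← ratPoint_mul m n' m' z', mul_comm m' m, dist_toL1_ratPoint,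
    ← sub_div, mul_div_assoc']
  exact div_le_div_of_nonneg_right (abs_le.mp (hlip _ _ _ _)).2 (by positivity)

theorem exists_lipschitzWith_extension (hL : 0 ≤ L)
    (hhom : ∀ (k m : ℕ+) (z : Fin d → ℤ), g₀ (k * m) ((k : ℤ) • z) = (k : ℝ) * g₀ m z)
    (hlip : ∀ (m m' : ℕ+) (z z' : Fin d → ℤ),
      |g₀ m z - g₀ m' z'| ≤ L * (|(m : ℝ) - (m' : ℝ)| + ∑ i, |(z i : ℝ) - (z' i : ℝ)|)) :
    ∃ G : L1Space d → ℝ, LipschitzWith (Real.toNNReal L) G ∧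
      ∀ n m z, G (toL1 (ratPoint n m z)) = g₀ n z / m := by
  obtain ⟨G, hG, hval⟩ := exists_lipschitzWith_extend_real_of_family
    (K := Real.toNNReal L) (fun p : ℕ+ × ℕ+ × (Fin d → ℤ) => toL1 (ratPoint p.1 p.2.1 p.2.2))
    (fun p => g₀ p.1 p.2.2 / p.2.1) fun p q => by
      rw [Real.coe_toNNReal _ hL]
      exact div_sub_div_le_dist_ratPoint hhom hlip _ _ _ _ _ _
  exact ⟨G, hG, fun n m z => hval (n, m, z)⟩

variable {F : ℝ × (Fin d → ℝ) → ℝ}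

theorem map_smul_of_continuous_of_ratPoint
    (hhom : ∀ (k m : ℕ+) (z : Fin d → ℤ), g₀ (k * m) ((k : ℤ) • z) = (k : ℝ) * g₀ m z)
    (hF : Continuous F) (hval : ∀ n m z, F (ratPoint n m z) = g₀ n z / m)
    {c : ℝ} (hc : 0 < c) {p : ℝ × (Fin d → ℝ)} (hp : 0 < p.1) : F (c • p) = c * F p := by
  have hEq : EqOn (fun x : ℝ × (ℝ × (Fin d → ℝ)) => F (x.1 • x.2)) (fun x => x.1 * F x.2)
      (posRats ×ˢ ratPoints d) := by
    rintro _ ⟨⟨k, l, hkl⟩, ⟨n, m, z, hnmz⟩⟩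
    simp only
    rw [← hkl, ← hnmz, div_smul_ratPoint, hval, hval, hhom]
    push_cast
    field_simp
  have := hEq.closure (by fun_prop) (by fun_prop)
  rw [closure_prod_eq] at this
  exact @this (c, p) ⟨Ioi_subset_closure_posRats hc, subset_closure_ratPoints hp⟩

theorem map_add_le_of_continuous_of_ratPoint
    (hsub : ∀ (m m' : ℕ+) (z z' : Fin d → ℤ), g₀ (m + m') (z + z') ≤ g₀ m z + g₀ m' z')
    (hF : Continuous F) (hval : ∀ n m z, F (ratPoint n m z) = g₀ n z / m)
    {p q : ℝ × (Fin d → ℝ)} (hp : 0 < p.1) (hq : 0 < q.1) : F (p + q) ≤ F p + F q := by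
  have hclosed : IsClosed {x : (ℝ × (Fin d → ℝ)) × (ℝ × (Fin d → ℝ)) |
      F (x.1 + x.2) ≤ F x.1 + F x.2} := isClosed_le (by fun_prop) (by fun_prop)
  have hS : ratPoints d ×ˢ ratPoints d ⊆ {x | F (x.1 + x.2) ≤ F x.1 + F x.2} := by
    rintro _ ⟨⟨n, m, z, hnmz⟩, ⟨n', m', z', hnmz'⟩⟩
    simp only [mem_ofPred_eq]
    rw [← hnmz, ← hnmz', ← ratPoint_mul m' n m z, ← ratPoint_mul m n' m' z', mul_comm m' m,
      ratPoint_add, hval, hval, hval, ← add_div]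
    exact div_le_div_of_nonneg_right (hsub _ _ _ _) (by positivity)
  have := hclosed.closure_subset_iff.mpr hS
  rw [closure_prod_eq] at this
  exact @this (p, q) ⟨subset_closure_ratPoints hp, subset_closure_ratPoints hq⟩

end

end

theorem stmt4_general (d : ℕ) (L : ℝ) (hL : 0 < L)
    (g₀ : ℕ+ → (Fin d → ℤ) → ℝ)
    (hhom : ∀ (k m : ℕ+) (z : Fin d → ℤ),
      g₀ (k * m) ((k : ℤ) • z) = (k : ℝ) * g₀ m z)
    (hlip : ∀ (m m' : ℕ+) (z z' : Fin d → ℤ),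
      |g₀ m z - g₀ m' z'| ≤ L * (|(m : ℝ) - (m' : ℝ)| + ∑ i, |(z i : ℝ) - (z' i : ℝ)|)) :
    ∃ g : ℝ → (Fin d → ℝ) → ℝ,
      -- existence: a continuous, homogeneous extension of `g₀` to `(0,∞) × ℝ^d`
      (ContinuousOn (fun p : ℝ × (Fin d → ℝ) => g p.1 p.2) {p | 0 < p.1} ∧
        (∀ (m : ℕ+) (z : Fin d → ℤ), g (m : ℝ) (fun i => (z i : ℝ)) = g₀ m z) ∧
        (∀ c t : ℝ, 0 < c → 0 < t → ∀ η : Fin d → ℝ, g (c * t) (c • η) = c * g t η)) ∧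
      -- uniqueness among such functions (on the domain `(0,∞) × ℝ^d`)
      (∀ g' : ℝ → (Fin d → ℝ) → ℝ,
        (ContinuousOn (fun p : ℝ × (Fin d → ℝ) => g' p.1 p.2) {p | 0 < p.1} ∧
          (∀ (m : ℕ+) (z : Fin d → ℤ), g' (m : ℝ) (fun i => (z i : ℝ)) = g₀ m z) ∧
          (∀ c t : ℝ, 0 < c → 0 < t → ∀ η : Fin d → ℝ, g' (c * t) (c • η) = c * g' t η)) →
        ∀ t : ℝ, 0 < t → ∀ η : Fin d → ℝ, g' t η = g t η) ∧
      -- the Lipschitz bound for `g`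
      (∀ t t' : ℝ, 0 < t → 0 < t' → ∀ η η' : Fin d → ℝ,
        |g t η - g t' η'| ≤ L * (|t - t'| + ∑ i, |η i - η' i|)) ∧
      -- the scaling identity `g(t,η) = t g(1, η/t)`
      (∀ t : ℝ, 0 < t → ∀ η : Fin d → ℝ, g t η = t * g 1 (t⁻¹ • η)) ∧
      -- subadditivity of `g₀` implies convexity of `η ↦ g(1,η)`
      ((∀ (m m' : ℕ+) (z z' : Fin d → ℤ),
          g₀ (m + m') (z + z') ≤ g₀ m z + g₀ m' z') →
        ConvexOn ℝ Set.univ (fun η : Fin d → ℝ => g 1 η)) := by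
  obtain ⟨G, hG, hval⟩ := exists_lipschitzWith_extension hL.le hhom hlip
  have hF : Continuous (G ∘ toL1) := hG.continuous.comp continuous_toL1
  have hsmul : ∀ c : ℝ, 0 < c → ∀ p, 0 < p.1 → G (toL1 (c • p)) = c * G (toL1 p) :=
    fun c hc p hp => map_smul_of_continuous_of_ratPoint hhom hF hval hc hp
  refine ⟨fun t η => G (toL1 (t, η)), ⟨hF.continuousOn, fun m z => ?_,
    fun c t hc ht η => hsmul c hc (t, η) ht⟩, ?_, fun t t' _ _ η η' => ?_,
    fun t ht η => ?_, fun hsub => ?_⟩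
  · simpa [ratPoint_one] using hval m 1 z
  · rintro g' ⟨hg'cont, hg'val, hg'smul⟩ t ht η
    have hg'ratPoint : EqOn (fun p => g' p.1 p.2) (G ∘ toL1) (ratPoints d) := by
      rintro _ ⟨n, m, z, rfl⟩
      have := hg'smul (m : ℝ)⁻¹ n (by positivity) (by positivity) (fun i => z i)
      rw [hg'val] at this
      rw [Function.comp_apply, hval, div_eq_inv_mul, ← this, ratPoint_eq_inv_smul]
      rfl
    exact hg'ratPoint.of_subset_closure hg'cont hF.continuousOn ratPoints_subset_fst_pos
      subset_closure_ratPoints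
      (show (t, η) ∈ {p : ℝ × (Fin d → ℝ) | 0 < p.1} from ht)
  · have := hG.dist_le_mul (toL1 (t, η)) (toL1 (t', η'))
    rwa [Real.dist_eq, dist_toL1, Real.coe_toNNReal _ hL.le] at this
  · simpa [smul_smul, ht.ne'] using hsmul t ht (1, t⁻¹ • η) one_pos
  · exact convexOn_slice_of_subadditive_of_homogeneous hsmul
      fun p q hp hq => map_add_le_of_continuous_of_ratPoint hsub hF hval hp hq

theorem stmt4 (d : ℕ) (hd : 1 ≤ d) (L : ℝ) (hL : 0 < L)
    (g₀ : ℕ+ → (Fin d → ℤ) → ℝ)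
    (hhom : ∀ (k m : ℕ+) (z : Fin d → ℤ),
      g₀ (k * m) ((k : ℤ) • z) = (k : ℝ) * g₀ m z)
    (hlip : ∀ (m m' : ℕ+) (z z' : Fin d → ℤ),
      |g₀ m z - g₀ m' z'| ≤ L * (|(m : ℝ) - (m' : ℝ)| + ∑ i, |(z i : ℝ) - (z' i : ℝ)|)) :
    ∃ g : ℝ → (Fin d → ℝ) → ℝ,
      -- existence: a continuous, homogeneous extension of `g₀` to `(0,∞) × ℝ^d`
      (ContinuousOn (fun p : ℝ × (Fin d → ℝ) => g p.1 p.2) {p | 0 < p.1} ∧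
        (∀ (m : ℕ+) (z : Fin d → ℤ), g (m : ℝ) (fun i => (z i : ℝ)) = g₀ m z) ∧
        (∀ c t : ℝ, 0 < c → 0 < t → ∀ η : Fin d → ℝ, g (c * t) (c • η) = c * g t η)) ∧
      -- uniqueness among such functions (on the domain `(0,∞) × ℝ^d`)
      (∀ g' : ℝ → (Fin d → ℝ) → ℝ,
        (ContinuousOn (fun p : ℝ × (Fin d → ℝ) => g' p.1 p.2) {p | 0 < p.1} ∧
          (∀ (m : ℕ+) (z : Fin d → ℤ), g' (m : ℝ) (fun i => (z i : ℝ)) = g₀ m z) ∧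
          (∀ c t : ℝ, 0 < c → 0 < t → ∀ η : Fin d → ℝ, g' (c * t) (c • η) = c * g' t η)) →
        ∀ t : ℝ, 0 < t → ∀ η : Fin d → ℝ, g' t η = g t η) ∧
      -- the Lipschitz bound for `g`
      (∀ t t' : ℝ, 0 < t → 0 < t' → ∀ η η' : Fin d → ℝ,
        |g t η - g t' η'| ≤ L * (|t - t'| + ∑ i, |η i - η' i|)) ∧
      -- the scaling identity `g(t,η) = t g(1, η/t)`
      (∀ t : ℝ, 0 < t → ∀ η : Fin d → ℝ, g t η = t * g 1 (t⁻¹ • η)) ∧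
      -- subadditivity of `g₀` implies convexity of `η ↦ g(1,η)`
      ((∀ (m m' : ℕ+) (z z' : Fin d → ℤ),
          g₀ (m + m') (z + z') ≤ g₀ m z + g₀ m' z') →
        ConvexOn ℝ Set.univ (fun η : Fin d → ℝ => g 1 η)) :=
  stmt4_general d L hL g₀ hhom hlip
end

section
/- Let m ≥ 1, M > 0, and let (f_n)_{n≥1} be a sequence of differentiable functions f_n : ℝ^m → ℝ such that each gradient ∇f_n : ℝ^m → ℝ^m is M-Lipschitz, and suppose f_n converges pointwise on ℝ^m to a function f. Then: f is differentiable on ℝ^m, ∇f is M-Lipschitz, ∇f_n(x) → ∇f(x) for every x ∈ ℝ^m, and the convergence ∇f_n → ∇f is uniform on every compact subset of ℝ^m. -/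
/-!
An `M`-Lipschitz gradient gives the uniform second-order bound
`|f y - f x - ⟪∇f x, y - x⟫| ≤ M ‖y - x‖²`. Comparing the increments of `f p` and `f q` along a
short step `t • v` then shows that `⟪∇f_n x, v⟫` is Cauchy for every `v`, which in finite
dimension makes `∇f_n x` converge to some `G x` (in infinite dimension `f_n = ⟪e_n, ·⟫` fails).
The second-order bound passes to the limit, so `F` has gradient `G`, and `G` is `M`-Lipschitz
as a pointwise limit of `M`-Lipschitz maps. An equi-Lipschitz family converging pointwise
converges uniformly on compact sets.
-/

open Filter Topology InnerProductSpace
open scoped NNReal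

theorem LipschitzWith.of_tendsto {ι α β : Type*} [PseudoMetricSpace α] [PseudoMetricSpace β]
    {l : Filter ι} [l.NeBot] {K : ℝ≥0} {g : ι → α → β} {G : α → β}
    (hg : ∀ i, LipschitzWith K (g i)) (hG : ∀ x, Tendsto (fun i => g i x) l (𝓝 (G x))) :
    LipschitzWith K G :=
  LipschitzWith.of_dist_le_mul fun x y =>
    le_of_tendsto ((hG x).dist (hG y)) (Eventually.of_forall fun i => (hg i).dist_le_mul x y)

theorem tendstoUniformlyOn_of_lipschitzWith_of_tendsto {ι α β : Type*} [PseudoMetricSpace α]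
    [PseudoMetricSpace β] {l : Filter ι} {K : ℝ≥0} {g : ι → α → β} {G : α → β} {s : Set α}
    (hs : IsCompact s) (hg : ∀ i, LipschitzWith K (g i))
    (hG : ∀ x, Tendsto (fun i => g i x) l (𝓝 (G x))) :
    TendstoUniformlyOn g G l s := by
  have hequi : EquicontinuousOn g s :=
    (LipschitzWith.uniformEquicontinuous g K hg).equicontinuous.equicontinuousOn s
  have hunif := (EquicontinuousOn.tendsto_uniformOnFun_iff_pi' (𝔖 := {s}) (by simpa using hs)
    (by simpa using hequi) l G).mpr (by simpa [tendsto_pi_nhds] using fun x _ => hG x)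
  exact UniformOnFun.tendsto_iff_tendstoUniformlyOn.mp hunif s rfl

variable {E : Type*} [NormedAddCommGroup E] [InnerProductSpace ℝ E]

theorem abs_sub_sub_inner_gradient_le [CompleteSpace E] {φ : E → ℝ} {M : ℝ≥0}
    (hφ : Differentiable ℝ φ) (hlip : LipschitzWith M (gradient φ)) (x y : E) :
    |φ y - φ x - ⟪gradient φ x, y - x⟫_ℝ| ≤ M * ‖y - x‖ ^ 2 := by
  have hfderiv : ∀ z, fderiv ℝ φ z = toDual ℝ E (gradient φ z) := fun z =>
    ((toDual ℝ E).apply_symm_apply _).symm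
  have bound : ∀ z ∈ Metric.closedBall x ‖y - x‖,
      ‖fderiv ℝ φ z - toDual ℝ E (gradient φ x)‖ ≤ M * ‖y - x‖ := by
    intro z hz
    rw [hfderiv, ← map_sub, LinearIsometryEquiv.norm_map, ← dist_eq_norm]
    exact (hlip.dist_le_mul z x).trans (by gcongr; exact hz)
  have := (convex_closedBall x ‖y - x‖).norm_image_sub_le_of_norm_fderiv_le'
    (fun z _ => hφ z) bound (Metric.mem_closedBall_self (norm_nonneg _))
    (y := y) (by simp [dist_eq_norm])
  rw [toDual_apply_apply, Real.norm_eq_abs] at this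
  linarith

theorem hasGradientAt_of_abs_sub_sub_inner_le [CompleteSpace E] {F : E → ℝ} {G x : E} {C : ℝ}
    (hF : ∀ y, |F y - F x - ⟪G, y - x⟫_ℝ| ≤ C * ‖y - x‖ ^ 2) : HasGradientAt F G x := by
  rw [hasGradientAt_iff_isLittleO]
  refine Asymptotics.IsBigO.trans_isLittleO ?_ (Asymptotics.isLittleO_pow_sub_sub x one_lt_two)
  exact Asymptotics.IsBigO.of_bound C (Eventually.of_forall fun y => by simpa using hF y)

theorem hasGradientAt_of_tendsto [CompleteSpace E] {ι : Type*} {l : Filter ι} [l.NeBot]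
    {f : ι → E → ℝ} {F : E → ℝ} {g : ι → E} {G x : E} {C : ℝ}
    (hf : ∀ i y, |f i y - f i x - ⟪g i, y - x⟫_ℝ| ≤ C * ‖y - x‖ ^ 2)
    (hfF : ∀ y, Tendsto (fun i => f i y) l (𝓝 (F y))) (hgG : Tendsto g l (𝓝 G)) :
    HasGradientAt F G x :=
  hasGradientAt_of_abs_sub_sub_inner_le fun y =>
    le_of_tendsto (((hfF y).sub (hfF x)).sub (hgG.inner tendsto_const_nhds)).abs
      (Eventually.of_forall fun i => hf i y)

theorem cauchySeq_inner_of_abs_sub_sub_inner_le {f : ℕ → E → ℝ} {F : E → ℝ} {g : ℕ → E} {x : E}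
    {C : ℝ} (hf : ∀ n y, |f n y - f n x - ⟪g n, y - x⟫_ℝ| ≤ C * ‖y - x‖ ^ 2)
    (hfF : ∀ y, Tendsto (fun n => f n y) atTop (𝓝 (F y))) (v : E) :
    CauchySeq fun n => ⟪g n, v⟫_ℝ := by
  rw [Metric.cauchySeq_iff]
  intro ε hε
  -- compare the increments of `f p` and `f q` along a step `t • v` so short that the
  -- quadratic errors `C t² ‖v‖²` cost at most `t ε / 2`
  set t := ε / (4 * (|C| * ‖v‖ ^ 2 + 1))
  have ht : 0 < t := by positivity
  have hCt : 2 * (C * (t * ‖v‖) ^ 2) < t * ε / 2 := by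
    have : t * (4 * (|C| * ‖v‖ ^ 2 + 1)) = ε := div_mul_cancel₀ _ (by positivity)
    nlinarith [le_abs_self C, sq_nonneg ‖v‖, mul_pos ht ht]
  have hstep : ∀ n, |f n (x + t • v) - f n x - t * ⟪g n, v⟫_ℝ| ≤ C * (t * ‖v‖) ^ 2 := by
    intro n
    simpa [inner_smul_right, norm_smul, abs_of_pos ht] using hf n (x + t • v)
  obtain ⟨N, hN⟩ := Metric.cauchySeq_iff.mp ((hfF (x + t • v)).sub (hfF x)).cauchySeq
    (t * ε / 2) (by positivity)
  refine ⟨N, fun p hp q hq => ?_⟩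
  have hpq := hN p hp q hq
  rw [Real.dist_eq] at hpq ⊢
  refine lt_of_mul_lt_mul_left ?_ ht.le
  calc t * |⟪g p, v⟫_ℝ - ⟪g q, v⟫_ℝ|
      = |t * (⟪g p, v⟫_ℝ - ⟪g q, v⟫_ℝ)| := by rw [abs_mul, abs_of_pos ht]
    _ = |(f p (x + t • v) - f p x - (f q (x + t • v) - f q x))
          - (f p (x + t • v) - f p x - t * ⟪g p, v⟫_ℝ)
          + (f q (x + t • v) - f q x - t * ⟪g q, v⟫_ℝ)| := by
        congr 1; ring
    _ ≤ t * ε / 2 + C * (t * ‖v‖) ^ 2 + C * (t * ‖v‖) ^ 2 :=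
        (abs_add_le _ _).trans (add_le_add ((abs_sub _ _).trans (add_le_add hpq.le (hstep p)))
          (hstep q))
    _ < t * ε := by linarith

theorem exists_tendsto_of_forall_cauchySeq_inner [FiniteDimensional ℝ E] {g : ℕ → E}
    (hg : ∀ v, CauchySeq fun n => ⟪g n, v⟫_ℝ) : ∃ G, Tendsto g atTop (𝓝 G) := by
  let b := stdOrthonormalBasis ℝ E
  choose c hc using fun i => cauchySeq_tendsto_of_complete (hg (b i))
  refine ⟨∑ i, c i • b i, ?_⟩
  have hsum : g = fun n => ∑ i, ⟪g n, b i⟫_ℝ • b i := by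
    funext n
    conv_lhs => rw [← b.sum_repr' (g n)]
    simp only [real_inner_comm]
  rw [hsum]
  exact tendsto_finsetSum _ fun i _ => (hc i).smul_const (b i)

theorem stmt15_general (m : ℕ) (M : NNReal)
    (f : ℕ → EuclideanSpace ℝ (Fin m) → ℝ) (F : EuclideanSpace ℝ (Fin m) → ℝ)
    (hdiff : ∀ n, Differentiable ℝ (f n))
    (hlip : ∀ n, LipschitzWith M (fun x => gradient (f n) x))
    (hconv : ∀ x, Tendsto (fun n => f n x) atTop (nhds (F x))) :
    Differentiable ℝ F ∧
    LipschitzWith M (fun x => gradient F x) ∧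
    (∀ x, Tendsto (fun n => gradient (f n) x) atTop (nhds (gradient F x))) ∧
    ∀ K : Set (EuclideanSpace ℝ (Fin m)), IsCompact K →
      TendstoUniformlyOn (fun n x => gradient (f n) x) (fun x => gradient F x) atTop K := by
  have hquad := fun n => abs_sub_sub_inner_gradient_le (hdiff n) (hlip n)
  choose G hG using fun x => exists_tendsto_of_forall_cauchySeq_inner
    (cauchySeq_inner_of_abs_sub_sub_inner_le (fun n => hquad n x) hconv)
  have hFG : ∀ x, HasGradientAt F (G x) x := fun x =>
    hasGradientAt_of_tendsto (fun n => hquad n x) hconv (hG x)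
  have hgradF : gradient F = G := funext fun x => (hFG x).gradient
  refine ⟨fun x => (hFG x).differentiableAt, ?_, ?_, fun K hK => ?_⟩ <;> simp only [hgradF]
  · exact LipschitzWith.of_tendsto hlip hG
  · exact hG
  · exact tendstoUniformlyOn_of_lipschitzWith_of_tendsto hK hlip hG

theorem stmt15 (m : ℕ) (hm : 1 ≤ m) (M : NNReal) (hM : 0 < M)
    (f : ℕ → EuclideanSpace ℝ (Fin m) → ℝ) (F : EuclideanSpace ℝ (Fin m) → ℝ)
    (hdiff : ∀ n, Differentiable ℝ (f n))
    (hlip : ∀ n, LipschitzWith M (fun x => gradient (f n) x))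
    (hconv : ∀ x, Tendsto (fun n => f n x) atTop (nhds (F x))) :
    Differentiable ℝ F ∧
    LipschitzWith M (fun x => gradient F x) ∧
    (∀ x, Tendsto (fun n => gradient (f n) x) atTop (nhds (gradient F x))) ∧
    ∀ K : Set (EuclideanSpace ℝ (Fin m)), IsCompact K →
      TendstoUniformlyOn (fun n x => gradient (f n) x) (fun x => gradient F x) atTop K :=
  stmt15_general m M f F hdiff hlip hconv
end

section
/- Let d ≥ 1 and let f : ℝ^d → ℝ ∪ {+∞} be a convex, lower semicontinuous function that is finite at every point of the closed ℓ¹-unit ball 𝔻 := {x ∈ ℝ^d : |x|₁ ≤ 1}. Then the restriction of f to 𝔻 is continuous (with respect to the subspace topology of 𝔻), including at boundary points of 𝔻. -/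
/-!
Lower semicontinuity is given, so only upper semicontinuity of `g = f.toReal` on the ball `𝔻` is
at stake. Since `𝔻` is the convex hull of the finitely many points `0, ±eᵢ`, `g` is bounded above
on `𝔻` by some `B`. Since `𝔻` is also a polyhedron, cut out by the inequalities `∑ sᵢ xᵢ ≤ 1` for
sign vectors `s`, there is `ε > 0` such that every segment from `x ∈ 𝔻` to a point of `𝔻` extends
inside `𝔻` to length `ε`: the constraints active at `x` stay satisfied along the ray, and the
inactive ones have slack. Writing `y` as a convex combination of `x` and the endpoint of the
extended segment gives `g y ≤ g x + ‖y - x‖ / ε * (B - g x)`, which tends to `g x` as `y → x`.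
-/

open Filter Finset Set Topology

section Polyhedron

variable {E ι : Type*} [NormedAddCommGroup E] [NormedSpace ℝ E]

def polyhedron (ℓ : ι → E →L[ℝ] ℝ) (c : ι → ℝ) : Set E := {x | ∀ i, ℓ i x ≤ c i}

theorem convex_polyhedron (ℓ : ι → E →L[ℝ] ℝ) (c : ι → ℝ) : Convex ℝ (polyhedron ℓ c) := by
  intro x hx y hy a b ha hb hab i
  obtain rfl : b = 1 - a := by linarith
  rw [map_add, map_smul, map_smul, smul_eq_mul, smul_eq_mul]
  linarith [mul_le_mul_of_nonneg_left (hx i) ha, mul_le_mul_of_nonneg_left (hy i) hb]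

theorem eventually_apply_add_smul_sub_le (ℓ : E →L[ℝ] ℝ) {c : ℝ} {x : E} (hx : ℓ x ≤ c) :
    ∀ᶠ ε in 𝓝 (0 : ℝ), ∀ y, ℓ y ≤ c → ∀ s : ℝ, 0 ≤ s → s * ‖y - x‖ ≤ ε →
      ℓ (x + s • (y - x)) ≤ c := by
  rcases hx.eq_or_lt with hx | hx
  · refine Eventually.of_forall fun ε y hy s hs _ => ?_
    rw [map_add, map_smul, map_sub, smul_eq_mul, hx]
    nlinarith
  · have hlim : Tendsto (fun ε : ℝ => ε * ‖ℓ‖) (𝓝 0) (𝓝 0) :=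
      (continuous_id.mul continuous_const).tendsto' 0 0 (zero_mul _)
    filter_upwards [hlim.eventually_lt_const (sub_pos.2 hx)] with ε hε y _ s hs hsε
    calc ℓ (x + s • (y - x)) = ℓ x + ℓ (s • (y - x)) := map_add ..
      _ ≤ ℓ x + ‖ℓ‖ * ‖s • (y - x)‖ := by gcongr; exact (le_abs_self _).trans (ℓ.le_opNorm _)
      _ ≤ ℓ x + ε * ‖ℓ‖ := by
        rw [norm_smul, Real.norm_of_nonneg hs]; nlinarith [norm_nonneg ℓ]
      _ ≤ c := by linarith

theorem exists_pos_forall_add_smul_sub_mem_polyhedron [Finite ι] (ℓ : ι → E →L[ℝ] ℝ)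
    (c : ι → ℝ) {x : E} (hx : x ∈ polyhedron ℓ c) :
    ∃ ε > 0, ∀ y ∈ polyhedron ℓ c, ∀ s : ℝ, 0 ≤ s → s * ‖y - x‖ ≤ ε →
      x + s • (y - x) ∈ polyhedron ℓ c := by
  have h := (eventually_all.2 fun i => eventually_apply_add_smul_sub_le (ℓ i) (hx i)).filter_mono
    (nhdsWithin_le_nhds (s := Ioi 0))
  obtain ⟨ε, hε, hpos⟩ := (h.and self_mem_nhdsWithin).exists
  exact ⟨ε, hpos, fun y hy s hs hsε i => hε i y (hy i) s hs hsε⟩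

end Polyhedron

section UpperSemicontinuity

variable {E : Type*} [NormedAddCommGroup E] [NormedSpace ℝ E] {P : Set E} {g : E → ℝ}
  {x y : E} {B ε : ℝ}

theorem ConvexOn.le_add_norm_sub_div_mul (hg : ConvexOn ℝ P g) (hB : ∀ z ∈ P, g z ≤ B)
    (hx : x ∈ P) (hε : 0 < ε) (hxy : ‖y - x‖ ≤ ε)
    (hext : ∀ s : ℝ, 0 ≤ s → s * ‖y - x‖ ≤ ε → x + s • (y - x) ∈ P) :
    g y ≤ g x + ‖y - x‖ / ε * (B - g x) := by
  rcases eq_or_ne y x with rfl | hne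
  · simp
  set t := ‖y - x‖ / ε
  have hnorm : 0 < ‖y - x‖ := norm_pos_iff.2 (sub_ne_zero.2 hne)
  have ht : 0 < t := div_pos hnorm hε
  have hz := hext t⁻¹ (inv_nonneg.2 ht.le) (by rw [inv_div, div_mul_cancel₀ _ hnorm.ne'])
  have hy : (1 - t) • x + t • (x + t⁻¹ • (y - x)) = y := by
    rw [smul_add, smul_smul, mul_inv_cancel₀ ht.ne', one_smul]; module
  have hconv := hg.2 hx hz (sub_nonneg.2 ((div_le_one hε).2 hxy)) ht.le (by ring)
  rw [hy, smul_eq_mul, smul_eq_mul] at hconv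
  linarith [mul_le_mul_of_nonneg_left (hB _ hz) ht.le]

theorem ConvexOn.upperSemicontinuousWithinAt_of_forall_add_smul_sub_mem (hg : ConvexOn ℝ P g)
    (hbdd : BddAbove (g '' P)) (hx : x ∈ P) (hε : 0 < ε)
    (hext : ∀ y ∈ P, ∀ s : ℝ, 0 ≤ s → s * ‖y - x‖ ≤ ε → x + s • (y - x) ∈ P) :
    UpperSemicontinuousWithinAt g P x := by
  obtain ⟨B, hB⟩ := hbdd
  intro a ha
  have hlim : Tendsto (fun y => g x + ‖y - x‖ / ε * (B - g x)) (𝓝 x) (𝓝 (g x)) := by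
    have : Continuous fun y => g x + ‖y - x‖ / ε * (B - g x) := by fun_prop
    simpa using this.tendsto x
  filter_upwards [nhdsWithin_le_nhds (hlim.eventually_lt_const ha),
    nhdsWithin_le_nhds (Metric.closedBall_mem_nhds x hε), self_mem_nhdsWithin] with y hya hyε hy
  rw [mem_closedBall_iff_norm] at hyε
  exact (hg.le_add_norm_sub_div_mul (fun z hz => hB (mem_image_of_mem g hz)) hx hε hyε
    (hext y hy)).trans_lt hya

theorem ConvexOn.upperSemicontinuousOn_polyhedron {ι : Type*} [Finite ι]
    {ℓ : ι → E →L[ℝ] ℝ} {c : ι → ℝ} (hg : ConvexOn ℝ (polyhedron ℓ c) g)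
    (hbdd : BddAbove (g '' polyhedron ℓ c)) : UpperSemicontinuousOn g (polyhedron ℓ c) := by
  intro x hx
  obtain ⟨ε, hε, hext⟩ := exists_pos_forall_add_smul_sub_mem_polyhedron ℓ c hx
  exact hg.upperSemicontinuousWithinAt_of_forall_add_smul_sub_mem hbdd hx hε hext

end UpperSemicontinuity

section ConvexHull

variable {𝕜 E β ι : Type*} [Field 𝕜] [LinearOrder 𝕜] [IsStrictOrderedRing 𝕜] [AddCommGroup E]
  [Module 𝕜 E]

theorem Convex.sum_smul_mem_of_zero_mem {s : Set E} (hs : Convex 𝕜 s) (h0 : (0 : E) ∈ s)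
    {t : Finset ι} {w : ι → 𝕜} {z : ι → E} (hw₀ : ∀ i ∈ t, 0 ≤ w i)
    (hw₁ : ∑ i ∈ t, w i ≤ 1) (hz : ∀ i ∈ t, z i ∈ s) : ∑ i ∈ t, w i • z i ∈ s := by
  rcases (sum_nonneg hw₀).eq_or_lt with hW | hW
  · rwa [sum_eq_zero fun i hi => by
      rw [(sum_eq_zero_iff_of_nonneg hw₀).1 hW.symm i hi, zero_smul]]
  · have := hs.smul_mem_of_zero_mem h0 (hs.centerMass_mem hw₀ hW hz) ⟨hW.le, hw₁⟩
    rwa [Finset.centerMass, smul_smul, mul_inv_cancel₀ hW.ne', one_smul] at this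

theorem ConvexOn.bddAbove_image_of_subset_convexHull [AddCommGroup β] [LinearOrder β]
    [IsOrderedAddMonoid β] [Module 𝕜 β] [IsStrictOrderedModule 𝕜 β] {s t : Set E} {g : E → β}
    (hg : ConvexOn 𝕜 s g) (ht : t.Finite) (hts : t ⊆ s) (hst : s ⊆ convexHull 𝕜 t) :
    BddAbove (g '' s) := by
  obtain ⟨B, hB⟩ := (ht.image g).bddAbove
  refine ⟨B, forall_mem_image.2 fun x hx => ?_⟩
  obtain ⟨y, hy, hxy⟩ := hg.exists_ge_of_mem_convexHull hts (hst hx)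
  exact hxy.trans (hB (mem_image_of_mem g hy))

end ConvexHull

section ERealValued

theorem convexOn_toReal_of_ereal {E : Type*} [AddCommGroup E] [Module ℝ E] {s : Set E}
    {f : E → EReal} (hs : Convex ℝ s) (hreal : ∀ x ∈ s, f x ≠ ⊥ ∧ f x ≠ ⊤)
    (hf : ∀ x ∈ s, ∀ y ∈ s, ∀ θ : ℝ, 0 ≤ θ → θ ≤ 1 →
      f (θ • x + (1 - θ) • y) ≤ (θ : EReal) * f x + ((1 - θ : ℝ) : EReal) * f y) :
    ConvexOn ℝ s fun x => (f x).toReal := by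
  have hcoe : ∀ z ∈ s, ((f z).toReal : EReal) = f z := fun z hz =>
    EReal.coe_toReal (hreal z hz).2 (hreal z hz).1
  refine ⟨hs, fun x hx y hy a b ha hb hab => ?_⟩
  obtain rfl : b = 1 - a := by linarith
  rw [smul_eq_mul, smul_eq_mul, ← EReal.coe_le_coe_iff, EReal.coe_add, EReal.coe_mul,
    EReal.coe_mul, hcoe _ (hs hx hy ha hb hab), hcoe x hx, hcoe y hy]
  exact hf x hx y hy a ha (by linarith)

theorem lowerSemicontinuousOn_toReal_of_isClosed_sublevel {X : Type*} [TopologicalSpace X]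
    {f : X → EReal} {s : Set X} (hf : ∀ a : ℝ, IsClosed {x | f x ≤ a})
    (hreal : ∀ x ∈ s, f x ≠ ⊥ ∧ f x ≠ ⊤) : LowerSemicontinuousOn (fun x => (f x).toReal) s := by
  have hcoe : ∀ z ∈ s, ((f z).toReal : EReal) = f z := fun z hz =>
    EReal.coe_toReal (hreal z hz).2 (hreal z hz).1
  intro x hx a ha
  have hxa : x ∈ {y | f y ≤ a}ᶜ := by
    rw [mem_compl_iff, mem_ofPred_eq, not_le, ← hcoe x hx]
    exact_mod_cast ha
  filter_upwards [nhdsWithin_le_nhds ((hf a).isOpen_compl.mem_nhds hxa), self_mem_nhdsWithin]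
    with y hya hy
  rw [mem_compl_iff, mem_ofPred_eq, not_le, ← hcoe y hy] at hya
  exact_mod_cast hya

end ERealValued

section L1Ball

variable {ι : Type*} [Fintype ι]

def l1Ball (ι : Type*) [Fintype ι] : Set (ι → ℝ) := {x | ∑ i, |x i| ≤ 1}

def signPairing (s : ι → SignType) : (ι → ℝ) →L[ℝ] ℝ :=
  ∑ i, (s i : ℝ) • ContinuousLinearMap.proj i

@[simp]
theorem signPairing_apply (s : ι → SignType) (x : ι → ℝ) :
    signPairing s x = ∑ i, (s i : ℝ) * x i := by
  simp [signPairing]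

theorem l1Ball_eq_polyhedron : l1Ball ι = polyhedron signPairing 1 := by
  ext x
  simp only [l1Ball, polyhedron, mem_ofPred_eq, signPairing_apply, Pi.one_apply]
  refine ⟨fun hx s => (sum_le_sum fun i _ => ?_).trans hx, fun hx => ?_⟩
  · have hs : |(s i : ℝ)| ≤ 1 := by cases s i <;> simp
    calc (s i : ℝ) * x i ≤ |(s i : ℝ)| * |x i| := by rw [← abs_mul]; exact le_abs_self _
      _ ≤ |x i| := mul_le_of_le_one_left (abs_nonneg _) hs
  · simpa only [sign_mul_self] using hx fun i => SignType.sign (x i)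

-- `0` is listed separately only for empty `ι`; otherwise it is `Pi.single i 0`.
theorem l1Ball_subset_convexHull [DecidableEq ι] :
    l1Ball ι ⊆
      convexHull ℝ (insert 0 (Set.range fun p : ι × SignType => Pi.single p.1 (p.2 : ℝ))) := by
  intro x hx
  have hx_eq : ∑ i, |x i| • Pi.single i (SignType.sign (x i) : ℝ) = x := by
    simp_rw [← Pi.single_smul, smul_eq_mul, abs_mul_sign]
    exact univ_sum_single x
  rw [← hx_eq]
  exact (convex_convexHull ℝ _).sum_smul_mem_of_zero_mem
    (subset_convexHull ℝ _ (mem_insert _ _)) (fun i _ => abs_nonneg _) hx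
    fun i _ => subset_convexHull ℝ _ (mem_insert_of_mem _ ⟨(i, SignType.sign (x i)), rfl⟩)

theorem insert_zero_range_single_subset_l1Ball [DecidableEq ι] :
    insert 0 (Set.range fun p : ι × SignType => Pi.single p.1 (p.2 : ℝ)) ⊆ l1Ball ι := by
  rintro _ (rfl | ⟨⟨i, s⟩, rfl⟩)
  · simp [l1Ball]
  · cases s <;> simp [l1Ball, Pi.single_apply, apply_ite abs]

theorem convex_l1Ball : Convex ℝ (l1Ball ι) :=
  l1Ball_eq_polyhedron (ι := ι) ▸ convex_polyhedron _ _

theorem ConvexOn.upperSemicontinuousOn_l1Ball {g : (ι → ℝ) → ℝ}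
    (hg : ConvexOn ℝ (l1Ball ι) g) : UpperSemicontinuousOn g (l1Ball ι) := by
  classical
  have hbdd := hg.bddAbove_image_of_subset_convexHull ((finite_range _).insert 0)
    insert_zero_range_single_subset_l1Ball l1Ball_subset_convexHull
  rw [l1Ball_eq_polyhedron] at hg hbdd ⊢
  exact hg.upperSemicontinuousOn_polyhedron hbdd

end L1Ball

theorem stmt16_general (d : ℕ) (f : (Fin d → ℝ) → EReal)
    -- `f` takes values in `ℝ ∪ {+∞}`
    (hnotbot : ∀ x, f x ≠ ⊥)
    -- convexity
    (hconv : ∀ x y : Fin d → ℝ, ∀ θ : ℝ, 0 ≤ θ → θ ≤ 1 →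
      f (θ • x + (1 - θ) • y) ≤ ((θ : ℝ) : EReal) * f x + (((1 - θ : ℝ)) : EReal) * f y)
    -- lower semicontinuity: sublevel sets are closed
    (hlsc : ∀ a : ℝ, IsClosed {x | f x ≤ ((a : ℝ) : EReal)})
    -- finiteness on the closed ℓ¹-unit ball
    (hfin : ∀ x : Fin d → ℝ, ∑ i, |x i| ≤ 1 → f x ≠ ⊤) :
    ContinuousOn f {x : Fin d → ℝ | ∑ i, |x i| ≤ 1} := by
  have hreal : ∀ x ∈ l1Ball (Fin d), f x ≠ ⊥ ∧ f x ≠ ⊤ := fun x hx => ⟨hnotbot x, hfin x hx⟩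
  have hg : ConvexOn ℝ (l1Ball (Fin d)) fun x => (f x).toReal :=
    convexOn_toReal_of_ereal convex_l1Ball hreal fun x _ y _ => hconv x y
  have hcont : ContinuousOn (fun x => (f x).toReal) (l1Ball (Fin d)) :=
    continuousOn_iff_lower_upperSemicontinuousOn.2
      ⟨lowerSemicontinuousOn_toReal_of_isClosed_sublevel hlsc hreal,
        hg.upperSemicontinuousOn_l1Ball⟩
  exact (continuous_coe_real_ereal.comp_continuousOn hcont).congr fun x hx =>
    (EReal.coe_toReal (hreal x hx).2 (hreal x hx).1).symm

theorem stmt16 (d : ℕ) (hd : 1 ≤ d) (f : (Fin d → ℝ) → EReal)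
    -- `f` takes values in `ℝ ∪ {+∞}`
    (hnotbot : ∀ x, f x ≠ ⊥)
    -- convexity
    (hconv : ∀ x y : Fin d → ℝ, ∀ θ : ℝ, 0 ≤ θ → θ ≤ 1 →
      f (θ • x + (1 - θ) • y) ≤ ((θ : ℝ) : EReal) * f x + (((1 - θ : ℝ)) : EReal) * f y)
    -- lower semicontinuity: sublevel sets are closed
    (hlsc : ∀ a : ℝ, IsClosed {x | f x ≤ ((a : ℝ) : EReal)})
    -- finiteness on the closed ℓ¹-unit ball
    (hfin : ∀ x : Fin d → ℝ, ∑ i, |x i| ≤ 1 → f x ≠ ⊤) :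
    ContinuousOn f {x : Fin d → ℝ | ∑ i, |x i| ≤ 1} :=
  stmt16_general d f hnotbot hconv hlsc hfin
end

section
/- Let (X_i)_{i≥1} be independent identically distributed random variables taking values in the positive integers, with finite mean μ := E[X₁] < ∞, and suppose the support of X₁ is aperiodic, i.e. the greatest common divisor of {k ∈ ℕ₊ : P(X₁ = k) > 0} equals 1. Let S_0 := 0 and S_k := X₁ + ⋯ + X_k. Then lim_{n→∞} Σ_{k=0}^∞ P( S_k = n ) = 1/μ. -/
/-!
Erdős–Feller–Pollard. Write `f m = P(X = m)` and `u n = ∑ₖ P(S_k = n)`. Conditioning on the last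
step gives the renewal equation `u n = ∑ₘ f m u (n - m)` for `n > 0`, and with the tails
`r t = P(X > t)`, whose sum is `μ`, it gives `∑_{t ≤ n} r t u (n - t) = 1`.

Since `0 ≤ u ≤ 1`, along a subsequence realising `limsup u` all backward shifts `u (φ j - t)`
converge, to some `w`. By dominated convergence `w t = ∑ₘ f m w (t + m)`, and `w` attains its
maximum `limsup u` at `0`, so `w` stays maximal along `t + supp f` from any maximal `t`. By
aperiodicity `supp f` generates a numerical semigroup containing all large integers, so `w` is
eventually `limsup u`, and dominated convergence in the tail identity gives `limsup u * μ = 1`.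
The same argument at `liminf u` gives `liminf u * μ = 1`.
-/

open MeasureTheory ProbabilityTheory Filter Topology Finset
open scoped ENNReal

section Renewal

variable {f u : ℕ → ℝ} {φ : ℕ → ℕ} {w : ℕ → ℝ}

-- The counterpart of `(1 - F(s)) U(s) = 1` for generating functions, divided by `1 - s`.
lemma sum_range_tail_mul_eq_one (hf0 : f 0 = 0) (hu0 : u 0 = 1)
    (hrec : ∀ n, 0 < n → u n = ∑ m ∈ range (n + 1), f m * u (n - m)) (n : ℕ) :
    ∑ t ∈ range (n + 1), (1 - ∑ m ∈ range (t + 1), f m) * u (n - t) = 1 := by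
  induction n with
  | zero => simp [hf0, hu0]
  | succ n ih =>
    have hconv : u (n + 1) = ∑ t ∈ range (n + 1), f (t + 1) * u (n - t) := by
      rw [hrec _ n.succ_pos, sum_range_succ']
      simp [hf0]
    have hstep : ∀ t ∈ range (n + 1),
        (1 - ∑ m ∈ range (t + 1 + 1), f m) * u (n + 1 - (t + 1))
          = (1 - ∑ m ∈ range (t + 1), f m) * u (n - t) - f (t + 1) * u (n - t) := by
      intro t _
      rw [sum_range_succ, Nat.add_sub_add_right]
      ring
    rw [sum_range_succ', sum_congr rfl hstep, sum_sub_distrib, ih, ← hconv]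
    simp [hf0]

lemma renewal_mem_Icc (hf_nonneg : ∀ n, 0 ≤ f n) (hf0 : f 0 = 0)
    (hf_le : ∀ n, ∑ m ∈ range n, f m ≤ 1) (hu0 : u 0 = 1)
    (hrec : ∀ n, 0 < n → u n = ∑ m ∈ range (n + 1), f m * u (n - m)) (n : ℕ) :
    u n ∈ Set.Icc 0 1 := by
  induction n using Nat.strong_induction_on with
  | _ n ih =>
    rcases n.eq_zero_or_pos with rfl | hn
    · simp [hu0]
    have hterm : ∀ m ∈ range (n + 1), f m * u (n - m) ∈ Set.Icc 0 (f m) := by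
      intro m _
      rcases m.eq_zero_or_pos with rfl | hm
      · simp [hf0]
      · have hum := ih (n - m) (by omega)
        exact ⟨mul_nonneg (hf_nonneg m) hum.1, mul_le_of_le_one_right (hf_nonneg m) hum.2⟩
    rw [hrec n hn]
    exact ⟨sum_nonneg fun m hm => (hterm m hm).1,
      (sum_le_sum fun m hm => (hterm m hm).2).trans (hf_le _)⟩

lemma eq_of_hasSum_mul_of_le (hf_nonneg : ∀ n, 0 ≤ f n) (hf : HasSum f 1)
    (hw : ∀ s, w s ≤ w 0) {t m : ℕ} (hharm : HasSum (fun k => f k * w (t + k)) (w t))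
    (ht : w t = w 0) (hm : f m ≠ 0) : w (t + m) = w 0 := by
  have hzero : HasSum (fun k => f k * (w 0 - w (t + k))) 0 := by
    simpa [mul_sub, ht] using (hf.mul_right (w 0)).sub hharm
  have hterm := congrFun ((hasSum_zero_iff_of_nonneg fun k =>
    mul_nonneg (hf_nonneg k) (sub_nonneg.mpr (hw _))).mp hzero) m
  linarith [(mul_eq_zero.mp hterm).resolve_left hm]

lemma eventually_eq_of_hasSum_mul_of_le (hf_nonneg : ∀ n, 0 ≤ f n) (hf : HasSum f 1)
    (hgcd : ∀ m : ℕ, (∀ k, f k ≠ 0 → m ∣ k) → m = 1) (hw : ∀ t, w t ≤ w 0)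
    (hharm : ∀ t, HasSum (fun m => f m * w (t + m)) (w t)) :
    ∃ N, ∀ t ≥ N, w t = w 0 := by
  set S : Set ℕ := {k | f k ≠ 0}
  have hS : ∀ x ∈ AddSubmonoid.closure S, ∀ t, w t = w 0 → w (t + x) = w 0 := by
    intro x hx
    induction hx using AddSubmonoid.closure_induction with
    | mem y hy => exact fun t ht => eq_of_hasSum_mul_of_le hf_nonneg hf hw (hharm t) ht hy
    | zero => exact fun t ht => ht
    | add y z _ _ ihy ihz => exact fun t ht => add_assoc t y z ▸ ihz _ (ihy t ht)
  have hgcd1 : Nat.setGcd S = 1 := hgcd _ fun k hk => Nat.setGcd_dvd_of_mem hk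
  obtain ⟨N, hN⟩ := Nat.exists_mem_closure_of_ge S
  exact ⟨N, fun t htN => by
    simpa using hS t (hN t htN (hgcd1 ▸ one_dvd t)) 0 rfl⟩

def IsShiftLimit (u : ℕ → ℝ) (φ : ℕ → ℕ) (w : ℕ → ℝ) : Prop :=
  Tendsto φ atTop atTop ∧ ∀ t, Tendsto (fun j => u (φ j - t)) atTop (𝓝 (w t))

lemma IsShiftLimit.shift (h : IsShiftLimit u φ w) (N : ℕ) :
    IsShiftLimit u (fun j => φ j - N) (fun t => w (N + t)) :=
  ⟨(tendsto_sub_atTop_nat N).comp h.1, fun t => by simpa only [Nat.sub_sub] using h.2 (N + t)⟩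

lemma IsShiftLimit.mapClusterPt (h : IsShiftLimit u φ w) (t : ℕ) :
    MapClusterPt (w t) atTop u :=
  .of_comp ((tendsto_sub_atTop_nat t).comp h.1) (h.2 t).mapClusterPt

lemma exists_isShiftLimit (hu : ∀ n, u n ∈ Set.Icc 0 1) {ψ : ℕ → ℕ} {c : ℝ}
    (hψ : Tendsto ψ atTop atTop) (hc : Tendsto (u ∘ ψ) atTop (𝓝 c)) :
    ∃ φ w, IsShiftLimit u φ w ∧ w 0 = c ∧ ∀ t, w t ∈ Set.Icc 0 1 := by
  obtain ⟨w, hwK, ρ, hρ, hconv⟩ := (isCompact_univ_pi fun _ => isCompact_Icc).tendsto_subseq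
    (x := fun j t => u (ψ j - t)) fun j t _ => hu _
  have hlim : ∀ t, Tendsto (fun j => u (ψ (ρ j) - t)) atTop (𝓝 (w t)) :=
    tendsto_pi_nhds.mp hconv
  refine ⟨ψ ∘ ρ, w, ⟨hψ.comp hρ.tendsto_atTop, hlim⟩, ?_, fun t => hwK t trivial⟩
  exact tendsto_nhds_unique (f := fun j => u (ψ (ρ j))) (by simpa using hlim 0)
    (hc.comp hρ.tendsto_atTop)

lemma IsShiftLimit.tendsto_sum_range_mul {a : ℕ → ℝ} (ha : Summable a)
    (hu : ∀ n, u n ∈ Set.Icc 0 1) (h : IsShiftLimit u φ w) :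
    Tendsto (fun j => ∑ m ∈ range (φ j + 1), a m * u (φ j - m)) atTop
      (𝓝 (∑' m, a m * w m)) := by
  have hsum (j : ℕ) := sum_eq_tsum_indicator (fun m => a m * u (φ j - m)) (range (φ j + 1))
  simp only [hsum]
  refine tendsto_tsum_of_dominated_convergence ha.abs (fun m => ?_)
    (.of_forall fun j m => ?_)
  · refine ((h.2 m).const_mul (a m)).congr' ?_
    filter_upwards [h.1.eventually_ge_atTop m] with j hj
    rw [Set.indicator_of_mem (by simp; omega)]
  · by_cases hm : m ∈ (range (φ j + 1) : Set ℕ)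
    · rw [Set.indicator_of_mem hm, norm_mul, Real.norm_eq_abs, Real.norm_eq_abs,
        abs_of_nonneg (hu _).1]
      exact mul_le_of_le_one_right (abs_nonneg _) (hu _).2
    · rw [Set.indicator_of_notMem hm, norm_zero]
      exact abs_nonneg _

lemma IsShiftLimit.hasSum_mul_shift (hf : Summable f)
    (hrec : ∀ n, 0 < n → u n = ∑ m ∈ range (n + 1), f m * u (n - m))
    (hu : ∀ n, u n ∈ Set.Icc 0 1) (hw : ∀ t, w t ∈ Set.Icc 0 1) (h : IsShiftLimit u φ w)
    (t : ℕ) : HasSum (fun m => f m * w (t + m)) (w t) := by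
  have hsummable : Summable fun m => f m * w (t + m) := by
    refine hf.abs.of_norm_bounded fun m => ?_
    rw [norm_mul, Real.norm_eq_abs, Real.norm_eq_abs, abs_of_nonneg (hw _).1]
    exact mul_le_of_le_one_right (abs_nonneg _) (hw _).2
  convert hsummable.hasSum
  refine tendsto_nhds_unique (h.2 t) (((h.shift t).tendsto_sum_range_mul hf hu).congr' ?_)
  filter_upwards [h.1.eventually_ge_atTop (t + 1)] with j hj
  exact (hrec _ (by omega)).symm

lemma IsShiftLimit.mul_eq_one_of_eventually_eq {μ c : ℝ} (hf0 : f 0 = 0) (hu0 : u 0 = 1)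
    (hrec : ∀ n, 0 < n → u n = ∑ m ∈ range (n + 1), f m * u (n - m))
    (hu : ∀ n, u n ∈ Set.Icc 0 1) (hμ : HasSum (fun t => 1 - ∑ m ∈ range (t + 1), f m) μ)
    (h : IsShiftLimit u φ w) {N : ℕ} (hN : ∀ t ≥ N, w t = c) : c * μ = 1 := by
  have hNc : ∀ t, w (N + t) = c := fun t => hN _ (Nat.le_add_right N t)
  have hlim := (h.shift N).tendsto_sum_range_mul hμ.summable hu
  simp only [sum_range_tail_mul_eq_one hf0 hu0 hrec, hNc, tsum_mul_right, hμ.tsum_eq] at hlim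
  linarith [tendsto_nhds_unique tendsto_const_nhds hlim]

lemma IsShiftLimit.mul_eq_one_of_extremal {μ : ℝ} (hf_nonneg : ∀ n, 0 ≤ f n) (hf0 : f 0 = 0)
    (hf : HasSum f 1) (hgcd : ∀ m : ℕ, (∀ k, f k ≠ 0 → m ∣ k) → m = 1)
    (hμ : HasSum (fun t => 1 - ∑ m ∈ range (t + 1), f m) μ) (hu0 : u 0 = 1)
    (hrec : ∀ n, 0 < n → u n = ∑ m ∈ range (n + 1), f m * u (n - m))
    (hu : ∀ n, u n ∈ Set.Icc 0 1) (hw : ∀ t, w t ∈ Set.Icc 0 1) (h : IsShiftLimit u φ w)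
    (hext : (∀ t, w t ≤ w 0) ∨ ∀ t, w 0 ≤ w t) : w 0 * μ = 1 := by
  have hharm := h.hasSum_mul_shift hf.summable hrec hu hw
  obtain ⟨N, hN⟩ : ∃ N, ∀ t ≥ N, w t = w 0 := by
    rcases hext with hle | hge
    · exact eventually_eq_of_hasSum_mul_of_le hf_nonneg hf hgcd hle hharm
    · obtain ⟨N, hN⟩ := eventually_eq_of_hasSum_mul_of_le (w := -w) hf_nonneg hf hgcd
        (by simpa using hge) fun t => by simpa using (hharm t).neg
      exact ⟨N, fun t ht => neg_inj.mp (hN t ht)⟩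
  exact h.mul_eq_one_of_eventually_eq hf0 hu0 hrec hu hμ hN

theorem tendsto_one_div_of_renewal {μ : ℝ} (hf_nonneg : ∀ n, 0 ≤ f n) (hf0 : f 0 = 0)
    (hgcd : ∀ m : ℕ, (∀ k, f k ≠ 0 → m ∣ k) → m = 1)
    (hμ : HasSum (fun t => 1 - ∑ m ∈ range (t + 1), f m) μ) (hu0 : u 0 = 1)
    (hrec : ∀ n, 0 < n → u n = ∑ m ∈ range (n + 1), f m * u (n - m)) :
    Tendsto u atTop (𝓝 (1 / μ)) := by
  have hf : HasSum f 1 := by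
    refine (hasSum_iff_tendsto_nat_of_nonneg hf_nonneg 1).mpr
      ((tendsto_add_atTop_iff_nat 1).mp ?_)
    simpa using (tendsto_const_nhds (x := (1 : ℝ))).sub hμ.summable.tendsto_atTop_zero
  have hu := renewal_mem_Icc hf_nonneg hf0 (fun n => sum_le_hasSum _ (fun m _ => hf_nonneg m) hf)
    hu0 hrec
  have hbdd : IsBoundedUnder (· ≤ ·) atTop u := isBoundedUnder_of ⟨1, fun n => (hu n).2⟩
  have hbdd' : IsBoundedUnder (· ≥ ·) atTop u := isBoundedUnder_of ⟨0, fun n => (hu n).1⟩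
  have hsup : limsup u atTop * μ = 1 := by
    obtain ⟨ψ, hψu, hψ⟩ := exists_seq_tendsto_limsup hbdd'.isCoboundedUnder_le hbdd
    obtain ⟨φ, w, h, hw0, hw⟩ := exists_isShiftLimit hu hψ hψu
    exact hw0 ▸ h.mul_eq_one_of_extremal hf_nonneg hf0 hf hgcd hμ hu0 hrec hu hw
      (.inl fun t => hw0 ▸ (h.mapClusterPt t).le_limsup hbdd)
  have hinf : liminf u atTop * μ = 1 := by
    obtain ⟨ψ, hψu, hψ⟩ := exists_seq_tendsto_liminf hbdd.isCoboundedUnder_ge hbdd'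
    obtain ⟨φ, w, h, hw0, hw⟩ := exists_isShiftLimit hu hψ hψu
    exact hw0 ▸ h.mul_eq_one_of_extremal hf_nonneg hf0 hf hgcd hμ hu0 hrec hu hw
      (.inr fun t => hw0 ▸ (h.mapClusterPt t).liminf_le hbdd')
  exact tendsto_of_liminf_eq_limsup (eq_one_div_of_mul_eq_one_left hinf)
    (eq_one_div_of_mul_eq_one_left hsup) hbdd hbdd'

end Renewal

section Probability

variable {Ω : Type*} [MeasurableSpace Ω] {P : Measure Ω}

lemma lintegral_natCast_eq_tsum_measure_lt {X : Ω → ℕ} (hX : Measurable X) :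
    ∫⁻ ω, (X ω : ℝ≥0∞) ∂P = ∑' t, P {ω | t < X ω} := by
  have hX' (ω : Ω) : (X ω : ℝ≥0∞) = ∑' t, {ω | t < X ω}.indicator 1 ω := by
    rw [tsum_eq_sum (s := range (X ω)) fun t ht => by simpa using ht]
    simp only [Set.indicator_apply, Set.mem_ofPred_eq, Pi.one_apply]
    rw [sum_ite_of_true fun t ht => mem_range.mp ht]
    simp
  have hmeas (t : ℕ) : MeasurableSet {ω | t < X ω} := measurableSet_lt measurable_const hX
  simp_rw [hX']
  rw [lintegral_tsum fun t => (measurable_one.indicator (hmeas t)).aemeasurable]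
  exact tsum_congr fun t => lintegral_indicator_one (hmeas t)

lemma hasSum_measureReal_lt_integral {X : Ω → ℕ} (hX : Measurable X)
    (hint : Integrable (fun ω => (X ω : ℝ)) P) :
    HasSum (fun t => P.real {ω | t < X ω}) (∫ ω, (X ω : ℝ) ∂P) := by
  have hlint : ∫⁻ ω, ENNReal.ofReal (X ω : ℝ) ∂P = ∑' t, P {ω | t < X ω} := by
    simp_rw [ENNReal.ofReal_natCast]
    exact lintegral_natCast_eq_tsum_measure_lt hX
  have hfin := hint.lintegral_lt_top.ne
  rw [hlint] at hfin
  rw [integral_eq_lintegral_of_nonneg_ae (.of_forall fun ω => by positivity)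
    hint.aestronglyMeasurable, hlint, ENNReal.tsum_toReal_eq fun t => ?_]
  · exact ENNReal.hasSum_toReal hfin
  · exact ne_top_of_le_ne_top hfin (ENNReal.le_tsum t)

lemma measureReal_lt_eq_one_sub_sum [IsProbabilityMeasure P] {X : Ω → ℕ} (hX : Measurable X)
    (t : ℕ) : P.real {ω | t < X ω} = 1 - ∑ m ∈ range (t + 1), P.real {ω | X ω = m} := by
  have hle : {ω | X ω ≤ t} = ⋃ m ∈ range (t + 1), {ω | X ω = m} := by
    ext ω
    simp
  have hlt : {ω | t < X ω} = {ω | X ω ≤ t}ᶜ := by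
    ext ω
    simp
  rw [hlt, probReal_compl_eq_one_sub (s := {ω | X ω ≤ t}) (hX measurableSet_Iic), hle,
    measureReal_biUnion_finset (f := fun m => {ω | X ω = m})
    (fun m _ n _ hmn => Set.disjoint_left.mpr fun ω h h' => hmn (h.symm.trans h'))
    fun m _ => hX (.singleton m)]

lemma ProbabilityTheory.IndepFun.measureReal_add_eq_sum [IsFiniteMeasure P] {Y Z : Ω → ℕ}
    (hY : Measurable Y) (hZ : Measurable Z) (h : IndepFun Y Z P) (n : ℕ) :
    P.real {ω | Y ω + Z ω = n}
      = ∑ m ∈ range (n + 1), P.real {ω | Z ω = m} * P.real {ω | Y ω = n - m} := by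
  have hset : {ω | Y ω + Z ω = n} = ⋃ m ∈ range (n + 1), Y ⁻¹' {n - m} ∩ Z ⁻¹' {m} := by
    ext ω
    simp only [Set.mem_ofPred_eq, Set.mem_iUnion, Set.mem_inter_iff, Set.mem_preimage,
      Set.mem_singleton_iff, mem_range, exists_prop]
    exact ⟨fun h => ⟨Z ω, by omega, by omega, rfl⟩, fun ⟨m, hm, hY, hZ⟩ => by omega⟩
  rw [hset, measureReal_biUnion_finset
    (fun m _ m' _ hmm' => Set.disjoint_left.mpr fun ω h h' => hmm' (h.2.symm.trans h'.2))
    fun m _ => (hY (.singleton _)).inter (hZ (.singleton _))]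
  refine sum_congr rfl fun m _ => ?_
  simp only [measureReal_def, h.measure_inter_preimage_eq_mul _ _ (.singleton _) (.singleton _),
    ENNReal.toReal_mul, mul_comm]
  rfl

variable {X : ℕ → Ω → ℕ}

lemma measure_sum_range_eq_of_lt (hpos : ∀ i, ∀ᵐ ω ∂P, 1 ≤ X i ω) {k n : ℕ} (hnk : n < k) :
    P {ω | ∑ i ∈ range k, X i ω = n} = 0 := by
  rw [measure_eq_zero_iff_ae_notMem]
  filter_upwards [ae_all_iff.mpr hpos] with ω hω
  have hk : k ≤ ∑ i ∈ range k, X i ω := by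
    simpa using card_nsmul_le_sum (range k) (X · ω) 1 fun i _ => hω i
  exact (by omega : ∑ i ∈ range k, X i ω ≠ n)

lemma summable_measureReal_sum_range_eq (hpos : ∀ i, ∀ᵐ ω ∂P, 1 ≤ X i ω) (n : ℕ) :
    Summable fun k => P.real {ω | ∑ i ∈ range k, X i ω = n} :=
  summable_of_ne_finset_zero (s := range (n + 1)) fun k hk => by
    rw [measureReal_def, measure_sum_range_eq_of_lt hpos (by simp at hk; omega),
      ENNReal.toReal_zero]

lemma tsum_measureReal_sum_range_eq_zero [IsProbabilityMeasure P]
    (hpos : ∀ i, ∀ᵐ ω ∂P, 1 ≤ X i ω) :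
    ∑' k, P.real {ω | ∑ i ∈ range k, X i ω = 0} = 1 := by
  rw [tsum_eq_single 0 fun k hk => by
    rw [measureReal_def, measure_sum_range_eq_of_lt hpos (Nat.pos_of_ne_zero hk),
      ENNReal.toReal_zero]]
  simp

lemma tsum_measureReal_sum_range_eq_of_pos [IsProbabilityMeasure P]
    (hmeas : ∀ i, Measurable (X i)) (hpos : ∀ i, ∀ᵐ ω ∂P, 1 ≤ X i ω) (hindep : iIndepFun X P)
    (hident : ∀ i, Measure.map (X i) P = Measure.map (X 0) P) {n : ℕ} (hn : 0 < n) :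
    ∑' k, P.real {ω | ∑ i ∈ range k, X i ω = n}
      = ∑ m ∈ range (n + 1),
          P.real {ω | X 0 ω = m} * ∑' k, P.real {ω | ∑ i ∈ range k, X i ω = n - m} := by
  have hdist (i m : ℕ) : P.real {ω | X i ω = m} = P.real {ω | X 0 ω = m} := by
    have h := congrArg (fun ν => ν.real {m}) (hident i)
    simp only [map_measureReal_apply (hmeas _) (.singleton m)] at h
    exact h
  have hstep (k : ℕ) : P.real {ω | ∑ i ∈ range (k + 1), X i ω = n}
      = ∑ m ∈ range (n + 1),
          P.real {ω | X 0 ω = m} * P.real {ω | ∑ i ∈ range k, X i ω = n - m} := by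
    have hind : IndepFun (fun ω => ∑ i ∈ range k, X i ω) (X k) P := by
      simpa [Finset.sum_fn] using hindep.indepFun_sum_range_succ hmeas k
    have hset : {ω | ∑ i ∈ range (k + 1), X i ω = n}
        = {ω | ∑ i ∈ range k, X i ω + X k ω = n} := by
      simp only [sum_range_succ]
    rw [hset, hind.measureReal_add_eq_sum (by fun_prop) (hmeas k)]
    simp only [hdist]
  have hzero : P.real {ω | ∑ i ∈ range 0, X i ω = n} = 0 := by simp [hn.ne]
  rw [(summable_measureReal_sum_range_eq hpos n).tsum_eq_zero_add, hzero, zero_add]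
  simp only [hstep]
  rw [Summable.tsum_finsetSum fun m _ => (summable_measureReal_sum_range_eq hpos _).mul_left _]
  simp only [tsum_mul_left]

end Probability

theorem stmt17 {Ω : Type*} [MeasurableSpace Ω] (P : Measure Ω) [IsProbabilityMeasure P]
    (X : ℕ → Ω → ℕ) (hmeas : ∀ i, Measurable (X i))
    (hpos : ∀ i, ∀ᵐ ω ∂P, 1 ≤ X i ω)
    (hindep : iIndepFun X P)
    (hident : ∀ i, Measure.map (X i) P = Measure.map (X 0) P)
    (hint : Integrable (fun ω => (X 0 ω : ℝ)) P)
    (μ : ℝ) (hμ : μ = ∫ ω, (X 0 ω : ℝ) ∂P)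
    -- aperiodicity: the only common divisor of the support of `X₁` is `1`
    (haper : ∀ m : ℕ, (∀ k : ℕ, P {ω | X 0 ω = k} ≠ 0 → m ∣ k) → m = 1) :
    Tendsto (fun n : ℕ =>
        ∑' k : ℕ, (P {ω | ∑ i ∈ Finset.range k, X i ω = n}).toReal)
      atTop (nhds (1 / μ)) := by
  have hf0 : P.real {ω | X 0 ω = 0} = 0 :=
    (measureReal_eq_zero_iff).mpr (by simpa using measure_sum_range_eq_of_lt hpos one_pos)
  have hgcd : ∀ m : ℕ, (∀ k, P.real {ω | X 0 ω = k} ≠ 0 → m ∣ k) → m = 1 :=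
    fun m hm => haper m fun k hk => hm k (ENNReal.toReal_ne_zero.mpr ⟨hk, measure_ne_top _ _⟩)
  have hμ' : HasSum (fun t => 1 - ∑ m ∈ range (t + 1), P.real {ω | X 0 ω = m}) μ := by
    simpa only [measureReal_lt_eq_one_sub_sum (hmeas 0), ← hμ] using
      hasSum_measureReal_lt_integral (hmeas 0) hint
  exact tendsto_one_div_of_renewal (f := fun m => P.real {ω | X 0 ω = m})
    (fun _ => measureReal_nonneg) hf0 hgcd hμ' (tsum_measureReal_sum_range_eq_zero hpos)
    fun n hn => tsum_measureReal_sum_range_eq_of_pos hmeas hpos hindep hident hn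
end
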